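/- arXiv:1508.07523 — 11 statements merged into one kernel-verified Lean document; each statement's English description precedes it below -/
import Mathlib

section
/- Let D = Σ_{(n,6)=1, n>0} x^{n²} and G = Σ_{n odd, n>0} x^{3n²} in Z/2[[x]]. Then D³ = G. -/
open PowerSeries Classical

/-- `D = Σ_{(n,6)=1, n > 0} x^{n²}` in `Z/2[[x]]`. -/
noncomputable def Dser : PowerSeries (ZMod 2) :=
  PowerSeries.mk fun n => if ∃ k : ℕ, Nat.Coprime k 6 ∧ 0 < k ∧ n = k ^ 2 then 1 else 0

/-- `G = F(x³) = Σ_{n odd, n > 0} x^{3n²}` in `Z/2[[x]]`. -/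
noncomputable def Gser : PowerSeries (ZMod 2) :=
  PowerSeries.mk fun n => if ∃ k : ℕ, Odd k ∧ 0 < k ∧ n = 3 * k ^ 2 then 1 else 0

open Finset

/-!
In characteristic 2, `D² = D(x²)`, so the coefficient of `xⁿ` in `D³` is the parity of the number
of pairs `(a, b)` of positive integers prime to 6 with `2a² + b² = n`. Such pairs exist only for
`n = 3m` with `m ≡ 1 (mod 8)`; choosing the signs `a ≡ b ≡ 1 (mod 6)` turns them into elements
`b + a√-2` of norm `3m` that are divisible by `π = 1 + √-2` but not by `π̄ = 1 - √-2`, one in each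
pair `±`. Dividing by `π` identifies these with the representations of `m` prime to `π̄`, again up
to sign, and a further division by `π` removes each factor 3 of `m`. When `3 ∤ m`, the involution
`x ↦ -x` shows that the number of such representations up to sign is odd exactly when `m` is a
square. So in general it is odd iff `m` is a square or three times a square, which for
`m ≡ 1 (mod 8)` means `n = 3k²` with `k` odd.
-/

lemma Nat.coprime_six_iff {k : ℕ} : k.Coprime 6 ↔ k % 6 = 1 ∨ k % 6 = 5 := by
  rw [Nat.Coprime, Nat.gcd_comm, Nat.gcd_rec]
  have h : k % 6 < 6 := Nat.mod_lt _ (by norm_num)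
  interval_cases k % 6 <;> decide

lemma Nat.sq_mod_twentyFour_of_coprime_six {k : ℕ} (hk : k.Coprime 6) : k ^ 2 % 24 = 1 := by
  rw [Nat.coprime_six_iff] at hk
  have h6 : k % 24 % 6 = k % 6 := Nat.mod_mod_of_dvd k (by norm_num)
  have := Nat.mod_lt k (show 24 > 0 by norm_num)
  rw [Nat.pow_mod]
  interval_cases k % 24 <;> omega

lemma Int.sq_emod_eight_of_odd {x : ℤ} (hx : Odd x) : x ^ 2 % 8 = 1 := by
  obtain ⟨k, rfl⟩ := hx
  obtain ⟨r, hr⟩ := Int.even_mul_succ_self k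
  have : (2 * k + 1) ^ 2 = 8 * r + 1 := by linear_combination 4 * hr
  omega

lemma Nat.sq_mod_eight_of_odd {k : ℕ} (hk : Odd k) : k ^ 2 % 8 = 1 := by
  exact_mod_cast Int.sq_emod_eight_of_odd (x := k) (by exact_mod_cast hk)

lemma Int.odd_and_odd_of_two_mul_sq_add_sq_emod_eight {x y : ℤ} (h : (2 * x ^ 2 + y ^ 2) % 8 = 3) :
    Odd x ∧ Odd y := by
  have hy : Odd y := by
    rcases Int.even_or_odd y with ⟨t, rfl⟩ | hy
    · have : (t + t) ^ 2 = 4 * t ^ 2 := by ring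
      omega
    · exact hy
  refine ⟨?_, hy⟩
  rcases Int.even_or_odd x with ⟨s, rfl⟩ | hx
  · have : (s + s) ^ 2 = 4 * s ^ 2 := by ring
    have := Int.sq_emod_eight_of_odd hy
    omega
  · exact hx

lemma Int.three_dvd_two_mul_sq_add_sq_iff (x y : ℤ) :
    3 ∣ 2 * x ^ 2 + y ^ 2 ↔ 3 ∣ x - y ∨ 3 ∣ x + y := by
  rw [show 2 * x ^ 2 + y ^ 2 = 3 * x ^ 2 - (x - y) * (x + y) by ring,
    dvd_sub_right (dvd_mul_right 3 _), Int.prime_three.dvd_mul]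

lemma Nat.exists_sq_or_three_mul_sq_three_mul_iff (m : ℕ) :
    (∃ k, 3 * m = k ^ 2 ∨ 3 * m = 3 * k ^ 2) ↔ ∃ k, m = k ^ 2 ∨ m = 3 * k ^ 2 := by
  constructor
  · rintro ⟨k, h | h⟩
    · obtain ⟨i, rfl⟩ := Nat.prime_three.dvd_of_dvd_pow (n := 2) ⟨m, h.symm⟩
      exact ⟨i, Or.inr (by linarith)⟩
    · exact ⟨k, Or.inl (by linarith)⟩
  · rintro ⟨k, h | h⟩
    · exact ⟨k, Or.inr (by rw [h])⟩
    · exact ⟨3 * k, Or.inl (by rw [h]; ring)⟩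

lemma Finset.card_eq_card_filter_fixed_zmod_two {α : Type*} [DecidableEq α] (s : Finset α)
    (g : α → α) (hmem : ∀ x ∈ s, g x ∈ s) (hinv : ∀ x ∈ s, g (g x) = x) :
    (#s : ZMod 2) = #(s.filter fun x => g x = x) := by
  rw [← card_filter_add_card_filter_not (s := s) (fun x => g x = x), Nat.cast_add,
    add_eq_left, card_eq_sum_ones, Nat.cast_sum, Nat.cast_one]
  refine sum_involution (fun a _ => g a) (fun _ _ => CharTwo.add_self_eq_zero 1)
    (fun a ha _ => (mem_filter.mp ha).2) (fun a ha => ?_) (fun a ha => hinv a (mem_filter.mp ha).1)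
  obtain ⟨has, hfix⟩ := mem_filter.mp ha
  exact mem_filter.mpr ⟨hmem a has, fun h => hfix (by rw [← h, hinv a has])⟩

open scoped Pointwise in
lemma Finset.card_eq_two_mul_card_of_neg {α : Type*} [DecidableEq α] [InvolutiveNeg α]
    {s t : Finset α} (hst : ∀ v, v ∈ s ↔ v ∈ t ∨ -v ∈ t) (ht : ∀ v ∈ t, -v ∉ t) :
    #s = 2 * #t := by
  have hs : s = t ∪ -t := by
    ext v
    rw [hst, mem_union, mem_neg']
  rw [hs, card_union_of_disjoint (disjoint_left.mpr fun v hv hv' => ht v hv (mem_neg'.mp hv')),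
    card_neg, two_mul]

lemma coeff_pow_eq_of_forall_le {R : Type*} [CommSemiring R] {φ ψ : R⟦X⟧} {n : ℕ}
    (h : ∀ m ≤ n, coeff m φ = coeff m ψ) (k : ℕ) : coeff n (φ ^ k) = coeff n (ψ ^ k) := by
  have htrunc : trunc (n + 1) φ = trunc (n + 1) ψ := by
    ext m
    simp only [coeff_trunc, Nat.lt_succ_iff]
    split_ifs with hm
    exacts [h m hm, rfl]
  have key := congrArg (fun f => Polynomial.coeff f n) (trunc_trunc_pow φ (n + 1) k)
  rw [htrunc, trunc_trunc_pow] at key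
  simpa only [coeff_trunc, Nat.lt_succ_self, if_true] using key.symm

lemma coeff_mk_ite_exists_sq {R : Type*} [Semiring R] (p : ℕ → Prop) [DecidablePred p] {m N : ℕ}
    (hm : m ≤ N) :
    coeff m (mk fun n => if ∃ k, p k ∧ n = k ^ 2 then (1 : R) else 0) =
      (∑ k ∈ (range (N + 1)).filter p, Polynomial.X ^ (k ^ 2) : Polynomial R).coeff m := by
  have hinj : Set.InjOn (· ^ 2) ((range (N + 1)).filter p : Set ℕ) :=
    fun a _ b _ h => Nat.pow_left_injective two_ne_zero h
  simp only [Polynomial.finsetSum_coeff, Polynomial.coeff_X_pow, coeff_mk]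
  rw [← sum_image (f := fun j => if m = j then (1 : R) else 0) hinj, sum_ite_eq]
  simp only [mem_image, mem_filter, mem_range]
  refine if_congr ⟨fun ⟨k, hk, hmk⟩ => ⟨k, ⟨?_, hk⟩, hmk.symm⟩,
    fun ⟨k, ⟨_, hk⟩, hmk⟩ => ⟨k, hk, hmk.symm⟩⟩ rfl rfl
  nlinarith

lemma coeff_sum_X_sq_pow_three {R : Type*} [CommSemiring R] [CharP R 2] (S : Finset ℕ) (n : ℕ) :
    ((∑ k ∈ S, Polynomial.X ^ (k ^ 2)) ^ 3 : Polynomial R).coeff n =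
      #((S ×ˢ S).filter fun ab => 2 * ab.1 ^ 2 + ab.2 ^ 2 = n) := by
  rw [pow_succ, sum_pow_char, sum_mul_sum, ← sum_product']
  simp only [← pow_mul, ← pow_add, Polynomial.finsetSum_coeff, Polynomial.coeff_X_pow]
  rw [sum_boole]
  simp only [mul_comm _ 2, eq_comm]

def coprimeSixPairs (n : ℕ) : Finset (ℕ × ℕ) :=
  let S := (range (n + 1)).filter fun k => k.Coprime 6 ∧ 0 < k
  (S ×ˢ S).filter fun ab => 2 * ab.1 ^ 2 + ab.2 ^ 2 = n

lemma mem_coprimeSixPairs {n : ℕ} {ab : ℕ × ℕ} :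
    ab ∈ coprimeSixPairs n ↔ ab.1.Coprime 6 ∧ ab.2.Coprime 6 ∧ 2 * ab.1 ^ 2 + ab.2 ^ 2 = n := by
  have hpos {k : ℕ} (hk : k.Coprime 6) : 0 < k := Nat.pos_of_ne_zero fun h => by simp [h] at hk
  simp only [coprimeSixPairs, mem_filter, mem_product, mem_range]
  constructor
  · rintro ⟨⟨⟨-, ha, -⟩, -, hb, -⟩, h⟩
    exact ⟨ha, hb, h⟩
  · rintro ⟨ha, hb, h⟩
    refine ⟨⟨⟨?_, ha, hpos ha⟩, ?_, hb, hpos hb⟩, h⟩ <;> nlinarith [hpos ha, hpos hb]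

lemma coeff_Dser_pow_three (n : ℕ) : coeff n (Dser ^ 3) = (#(coprimeSixPairs n) : ZMod 2) := by
  have hD : Dser = mk fun n => if ∃ k, (k.Coprime 6 ∧ 0 < k) ∧ n = k ^ 2 then 1 else 0 := by
    simp only [Dser, and_assoc]
  rw [hD, coeff_pow_eq_of_forall_le (fun m hm => (coeff_mk_ite_exists_sq _ hm).trans
    (Polynomial.coeff_coe _ _).symm), ← Polynomial.coe_pow, Polynomial.coeff_coe,
    coeff_sum_X_sq_pow_three]
  rfl

noncomputable def normReps (n : ℕ) : Finset (ℤ × ℤ) :=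
  (Icc (-(n : ℤ)) n ×ˢ Icc (-(n : ℤ)) n).filter fun v => 2 * v.1 ^ 2 + v.2 ^ 2 = n

lemma mem_normReps {n : ℕ} {v : ℤ × ℤ} : v ∈ normReps n ↔ 2 * v.1 ^ 2 + v.2 ^ 2 = n := by
  have bound (z : ℤ) (hz : z ^ 2 ≤ n) : -(n : ℤ) ≤ z ∧ z ≤ n := by
    have := Int.le_self_sq (-z)
    rw [neg_sq] at this
    constructor <;> linarith [Int.le_self_sq z]
  simp only [normReps, mem_filter, mem_product, mem_Icc, and_iff_right_iff_imp]
  intro h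
  exact ⟨bound _ (by nlinarith [sq_nonneg v.2]), bound _ (by nlinarith [sq_nonneg v.1])⟩

/-- Representations `m = y² + 2x²` with `y + x√-2` not divisible by the prime `1 - √-2`. -/
noncomputable def admissibleReps (m : ℕ) : Finset (ℤ × ℤ) :=
  (normReps m).filter fun v => ¬ 3 ∣ v.1 + v.2

lemma mem_admissibleReps {m : ℕ} {v : ℤ × ℤ} :
    v ∈ admissibleReps m ↔ 2 * v.1 ^ 2 + v.2 ^ 2 = m ∧ ¬ 3 ∣ v.1 + v.2 := by
  rw [admissibleReps, mem_filter, mem_normReps]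

lemma three_dvd_sub_of_mem_admissibleReps {m : ℕ} {v : ℤ × ℤ} (hv : v ∈ admissibleReps (3 * m)) :
    3 ∣ v.1 - v.2 := by
  rw [mem_admissibleReps] at hv
  have h3 : (3 : ℤ) ∣ 2 * v.1 ^ 2 + v.2 ^ 2 := ⟨m, by rw [hv.1]; push_cast; ring⟩
  exact ((Int.three_dvd_two_mul_sq_add_sq_iff _ _).mp h3).resolve_right hv.2

/-- The two maps are division and multiplication by `1 + √-2`. -/
lemma card_admissibleReps_three_mul (m : ℕ) : #(admissibleReps (3 * m)) = #(admissibleReps m) := by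
  refine card_nbij' (fun v => ((v.1 - v.2) / 3, (v.2 + 2 * v.1) / 3))
    (fun v => (v.1 + v.2, v.2 - 2 * v.1)) (fun v hv => ?_) (fun v hv => ?_) (fun v hv => ?_)
    (fun v _ => ?_)
  · obtain ⟨a, ha⟩ := three_dvd_sub_of_mem_admissibleReps hv
    obtain ⟨x, y⟩ := v
    rw [mem_coe, mem_admissibleReps] at hv ⊢
    dsimp only at ha hv ⊢
    rw [ha, show y + 2 * x = 3 * (y + 2 * a) by omega, Int.mul_ediv_cancel_left _ three_ne_zero,
      Int.mul_ediv_cancel_left _ three_ne_zero]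
    obtain rfl : x = y + 3 * a := by omega
    push_cast at hv
    exact ⟨mul_left_cancel₀ three_ne_zero (by linear_combination hv.1), by omega⟩
  · rw [mem_coe, mem_admissibleReps] at hv ⊢
    push_cast
    constructor
    · linear_combination 3 * hv.1
    · omega
  · have := three_dvd_sub_of_mem_admissibleReps hv
    ext <;> dsimp only <;> omega
  · ext <;> dsimp only <;> omega

noncomputable def posAdmissibleReps (m : ℕ) : Finset (ℤ × ℤ) :=
  (admissibleReps m).filter fun v => 0 < v.2

lemma card_admissibleReps_eq_two_mul {m : ℕ} (hm : Odd m) :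
    #(admissibleReps m) = 2 * #(posAdmissibleReps m) := by
  obtain ⟨r, rfl⟩ := hm
  refine card_eq_two_mul_card_of_neg (fun v => ?_) (fun v hv => ?_)
  · simp only [posAdmissibleReps, mem_filter, mem_admissibleReps, Prod.fst_neg, Prod.snd_neg,
      neg_sq, ← neg_add, dvd_neg]
    have : v.2 = 0 → v.2 ^ 2 = 0 := fun h => by rw [h, zero_pow two_ne_zero]
    omega
  · simp only [posAdmissibleReps, mem_filter, Prod.snd_neg] at hv ⊢
    omega

lemma card_posAdmissibleReps_three_mul {m : ℕ} (hm : Odd m) :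
    #(posAdmissibleReps (3 * m)) = #(posAdmissibleReps m) := by
  have h3m := card_admissibleReps_eq_two_mul (Nat.odd_mul.mpr ⟨by decide, hm⟩ : Odd (3 * m))
  have := card_admissibleReps_eq_two_mul hm
  have := card_admissibleReps_three_mul m
  omega

lemma card_posAdmissibleReps_zmod_two_of_not_dvd {m : ℕ} (h3 : ¬ 3 ∣ m) :
    (#(posAdmissibleReps m) : ZMod 2) = if ∃ k, m = k ^ 2 then 1 else 0 := by
  have h3' : ¬ (3 : ℤ) ∣ m := by exact_mod_cast h3
  have hflip : ∀ v ∈ posAdmissibleReps m, (-v.1, v.2) ∈ posAdmissibleReps m := by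
    rintro ⟨x, y⟩ hv
    simp only [posAdmissibleReps, mem_filter, mem_admissibleReps] at hv ⊢
    obtain ⟨⟨hq, -⟩, hy⟩ := hv
    have : ¬ (3 ∣ x - y ∨ 3 ∣ x + y) := by
      rwa [← Int.three_dvd_two_mul_sq_add_sq_iff, hq]
    exact ⟨⟨by rw [neg_sq, hq], by omega⟩, hy⟩
  have hfixed : ∀ v, v ∈ (posAdmissibleReps m).filter (fun v => (-v.1, v.2) = v) ↔
      v.1 = 0 ∧ v.2 ^ 2 = m ∧ 0 < v.2 := by
    rintro ⟨x, y⟩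
    simp only [mem_filter, posAdmissibleReps, mem_admissibleReps, Prod.mk.injEq, neg_eq_self,
      and_true]
    constructor
    · rintro ⟨⟨⟨hq, -⟩, hy⟩, rfl⟩
      exact ⟨rfl, by simpa using hq, hy⟩
    · rintro ⟨rfl, hq, hy⟩
      refine ⟨⟨⟨by simpa using hq, ?_⟩, hy⟩, rfl⟩
      rw [zero_add]
      exact fun h => h3' (hq ▸ dvd_pow h two_ne_zero)
  rw [card_eq_card_filter_fixed_zmod_two _ (fun v => (-v.1, v.2)) hflip (fun v _ => by simp)]
  split_ifs with hsq
  · obtain ⟨k, rfl⟩ := hsq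
    have hk : 0 < (k : ℤ) := by
      rcases Nat.eq_zero_or_pos k with rfl | hk
      · exact absurd (dvd_zero 3) h3
      · exact_mod_cast hk
    suffices (posAdmissibleReps (k ^ 2)).filter (fun v => (-v.1, v.2) = v) = {(0, (k : ℤ))} by
      rw [this, card_singleton, Nat.cast_one]
    ext ⟨x, y⟩
    rw [hfixed, mem_singleton, Prod.mk.injEq]
    push_cast
    constructor
    · rintro ⟨rfl, hq, hy⟩
      exact ⟨rfl, (pow_left_inj₀ hy.le hk.le two_ne_zero).mp hq⟩
    · rintro ⟨rfl, rfl⟩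
      exact ⟨rfl, rfl, hk⟩
  · rw [card_eq_zero.mpr (eq_empty_of_forall_notMem fun v hv => ?_), Nat.cast_zero]
    obtain ⟨-, hq, -⟩ := (hfixed v).mp hv
    exact hsq ⟨v.2.natAbs, by zify; rw [sq_abs, hq]⟩

lemma card_posAdmissibleReps_zmod_two {m : ℕ} (hm : Odd m) :
    (#(posAdmissibleReps m) : ZMod 2) = if ∃ k, m = k ^ 2 ∨ m = 3 * k ^ 2 then 1 else 0 := by
  induction m using Nat.strong_induction_on with
  | _ m ih =>
    by_cases h3 : 3 ∣ m
    · obtain ⟨m, rfl⟩ := h3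
      have hm' : Odd m := (Nat.odd_mul.mp hm).2
      rw [card_posAdmissibleReps_three_mul hm', ih m (by have := hm'.pos; omega) hm']
      exact if_congr (Nat.exists_sq_or_three_mul_sq_three_mul_iff m).symm rfl rfl
    · rw [card_posAdmissibleReps_zmod_two_of_not_dvd h3]
      refine if_congr ⟨fun ⟨k, hk⟩ => ⟨k, Or.inl hk⟩, ?_⟩ rfl rfl
      rintro ⟨k, hk | hk⟩
      exacts [⟨k, hk⟩, absurd ⟨k ^ 2, hk⟩ h3]

noncomputable def oneModSixReps (n : ℕ) : Finset (ℤ × ℤ) :=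
  (normReps n).filter fun v => v.1 % 6 = 1 ∧ v.2 % 6 = 1

lemma card_admissibleReps_eq_two_mul_card_oneModSixReps {m : ℕ} (hm : m % 8 = 1) :
    #(admissibleReps (3 * m)) = 2 * #(oneModSixReps (3 * m)) := by
  refine card_eq_two_mul_card_of_neg (fun v => ?_) (fun v hv => ?_)
  · simp only [oneModSixReps, mem_filter, mem_admissibleReps, mem_normReps, Prod.fst_neg,
      Prod.snd_neg, neg_sq]
    constructor
    · intro hv
      have hsub := three_dvd_sub_of_mem_admissibleReps (mem_admissibleReps.mpr hv)
      obtain ⟨hx, hy⟩ :=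
        Int.odd_and_odd_of_two_mul_sq_add_sq_emod_eight (by rw [hv.1]; push_cast; omega)
      rw [Int.odd_iff] at hx hy
      have : v.1 % 6 = 1 ∨ v.1 % 6 = 5 := by omega
      omega
    · rintro (⟨hq, hx, hy⟩ | ⟨hq, hx, hy⟩) <;> exact ⟨hq, by omega⟩
  · simp only [oneModSixReps, mem_filter, Prod.fst_neg] at hv ⊢
    omega

lemma card_coprimeSixPairs_eq_card_oneModSixReps (n : ℕ) :
    #(coprimeSixPairs n) = #(oneModSixReps n) := by
  let sign (a : ℕ) : ℤ := if a % 6 = 1 then a else -a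
  refine card_nbij' (fun ab => (sign ab.1, sign ab.2)) (fun v => (v.1.natAbs, v.2.natAbs))
    (fun ab hab => ?_) (fun v hv => ?_) (fun ab hab => ?_) (fun v hv => ?_)
  · rw [mem_coe, mem_coprimeSixPairs, Nat.coprime_six_iff, Nat.coprime_six_iff] at hab
    obtain ⟨ha, hb, h⟩ := hab
    rw [mem_coe, oneModSixReps, mem_filter, mem_normReps]
    have hsq (a : ℕ) : sign a ^ 2 = (a : ℤ) ^ 2 := by
      simp only [sign]; split_ifs <;> simp
    refine ⟨by rw [hsq, hsq]; exact_mod_cast h, ?_, ?_⟩ <;> simp only [sign] <;> split_ifs <;> omega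
  · rw [mem_coe, oneModSixReps, mem_filter, mem_normReps] at hv
    obtain ⟨h, hx, hy⟩ := hv
    rw [mem_coe, mem_coprimeSixPairs, Nat.coprime_six_iff, Nat.coprime_six_iff]
    dsimp only
    refine ⟨by omega, by omega, ?_⟩
    zify
    rwa [sq_abs, sq_abs]
  · simp only [sign]
    ext <;> dsimp only <;> split_ifs <;> simp
  · rw [mem_coe, oneModSixReps, mem_filter] at hv
    simp only [sign]
    ext <;> dsimp only <;> split_ifs <;> omega

lemma card_coprimeSixPairs_zmod_two (n : ℕ) :
    (#(coprimeSixPairs n) : ZMod 2) = if ∃ k, Odd k ∧ 0 < k ∧ n = 3 * k ^ 2 then 1 else 0 := by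
  by_cases hn : ∃ m, n = 3 * m ∧ m % 8 = 1
  · obtain ⟨m, rfl, hm⟩ := hn
    have hodd : Odd m := Nat.odd_iff.mpr (by omega)
    have hreduce : #(oneModSixReps (3 * m)) = #(posAdmissibleReps m) := by
      have := card_admissibleReps_eq_two_mul_card_oneModSixReps hm
      have := card_admissibleReps_eq_two_mul hodd
      have := card_admissibleReps_three_mul m
      omega
    rw [card_coprimeSixPairs_eq_card_oneModSixReps, hreduce, card_posAdmissibleReps_zmod_two hodd]
    refine if_congr ⟨?_, fun ⟨k, _, _, hk⟩ => ⟨k, Or.inl (by omega)⟩⟩ rfl rfl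
    rintro ⟨k, hk | hk⟩
    · have hk' : Odd k := (Nat.odd_pow_iff two_ne_zero).mp (hk ▸ hodd)
      exact ⟨k, hk', hk'.pos, by rw [hk]⟩
    · have hk' : Odd k := (Nat.odd_pow_iff two_ne_zero).mp (Nat.odd_mul.mp (hk ▸ hodd)).2
      have := Nat.sq_mod_eight_of_odd hk'
      omega
  · rw [card_eq_zero.mpr (eq_empty_of_forall_notMem fun ab hab => ?_), Nat.cast_zero, if_neg]
    · rintro ⟨k, hk, -, rfl⟩
      exact hn ⟨k ^ 2, rfl, Nat.sq_mod_eight_of_odd hk⟩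
    · obtain ⟨ha, hb, h⟩ := mem_coprimeSixPairs.mp hab
      have := Nat.sq_mod_twentyFour_of_coprime_six ha
      have := Nat.sq_mod_twentyFour_of_coprime_six hb
      exact hn ⟨n / 3, by omega, by omega⟩

theorem stmt1 : Dser ^ 3 = Gser := by
  ext n
  rw [coeff_Dser_pow_three, card_coprimeSixPairs_zmod_two, Gser, coeff_mk]
end

section
/- Let E = Σ_{(n,3)=1, n>0} x^{n²} and D = Σ_{(n,6)=1, n>0} x^{n²} in Z/2[[x]]. Then E⁴ + E = D. -/
/-!
By the Frobenius endomorphism of `𝔽₂[[x]]`, `E⁴(x) = E(x⁴) = Σ_{(n,3)=1} x^{(2n)²}` is the part of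
`E` coming from even `n`. Adding `E` in characteristic 2 cancels that part and leaves the sum over
odd `n` prime to 3, i.e. over `n` prime to 6, which is `D`.
-/

open PowerSeries Classical

/-- `E = Σ_{(n,3)=1, n > 0} x^{n²}` in `Z/2[[x]]`. -/
noncomputable def Eser : PowerSeries (ZMod 2) :=
  PowerSeries.mk fun n => if ∃ k : ℕ, Nat.Coprime k 3 ∧ 0 < k ∧ n = k ^ 2 then 1 else 0

open Set

section IndicatorSeries

variable {R : Type*}

noncomputable def indicatorSeries [Semiring R] (A : Set ℕ) : R⟦X⟧ :=
  mk (A.indicator 1)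

theorem indicatorSeries_union [Semiring R] {A B : Set ℕ} (h : Disjoint A B) :
    (indicatorSeries (A ∪ B) : R⟦X⟧) = indicatorSeries A + indicatorSeries B := by
  ext n
  simp [indicatorSeries, indicator_union_of_disjoint h]

theorem expand_indicatorSeries [CommRing R] (m : ℕ) (hm : m ≠ 0) (A : Set ℕ) :
    expand m hm (indicatorSeries A : R⟦X⟧) = indicatorSeries ((m * ·) '' A) := by
  ext n
  rw [coeff_expand]
  simp only [indicatorSeries, coeff_mk]
  split_ifs with h
  · obtain ⟨k, rfl⟩ := h
    simp [Nat.mul_div_cancel_left k (Nat.pos_of_ne_zero hm), indicator_apply, hm]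
  · rw [indicator_of_notMem]
    rintro ⟨k, -, rfl⟩
    exact h (dvd_mul_right m k)

theorem expand_indicatorSeries_image_sq [CommRing R] (m : ℕ) (hm : m ≠ 0) (s : Set ℕ) :
    expand (m ^ 2) (pow_ne_zero 2 hm) (indicatorSeries ((· ^ 2) '' s) : R⟦X⟧) =
      indicatorSeries ((· ^ 2) '' ((m * ·) '' s)) := by
  rw [expand_indicatorSeries, image_image, image_image]
  simp only [mul_pow]

theorem mk_ite_exists_coprime_sq_eq_indicatorSeries [Semiring R] (c : ℕ) :
    (mk fun n => if ∃ k : ℕ, Nat.Coprime k c ∧ 0 < k ∧ n = k ^ 2 then 1 else 0 : R⟦X⟧) =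
      indicatorSeries ((· ^ 2) '' {k | k.Coprime c ∧ 0 < k}) := by
  ext n
  simp [indicatorSeries, indicator_apply, eq_comm, and_assoc]

end IndicatorSeries

theorem pow_char_pow_eq_expand (p : ℕ) [Fact p.Prime] (n : ℕ) (f : (ZMod p)⟦X⟧) :
    f ^ p ^ n = expand (p ^ n) (pow_ne_zero n (Fact.out : p.Prime).ne_zero) f := by
  have hid : iterateFrobenius (ZMod p) p n = RingHom.id _ :=
    RingHom.ext fun x => by rw [iterateFrobenius_def, ZMod.pow_card_pow, RingHom.id_apply]
  rw [← MvPowerSeries.map_iterateFrobenius_expand p (Fact.out : p.Prime).ne_zero f n, hid,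
    MvPowerSeries.map_id]
  rfl

theorem setOf_coprime_eq_union (c : ℕ) (hc : Odd c) :
    {k : ℕ | k.Coprime c ∧ 0 < k} =
      {k | k.Coprime (2 * c) ∧ 0 < k} ∪ (2 * ·) '' {k | k.Coprime c ∧ 0 < k} := by
  ext k
  simp only [mem_ofPred_eq, mem_union, mem_image, Nat.coprime_mul_iff_right, Nat.coprime_two_right]
  constructor
  · rintro ⟨hkc, hk⟩
    rcases Nat.even_or_odd' k with ⟨m, rfl | rfl⟩
    · exact Or.inr ⟨m, ⟨Nat.Coprime.coprime_dvd_left (dvd_mul_left m 2) hkc, by omega⟩, rfl⟩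
    · exact Or.inl ⟨⟨odd_two_mul_add_one m, hkc⟩, hk⟩
  · rintro (⟨⟨-, hkc⟩, hk⟩ | ⟨m, ⟨hmc, hm⟩, rfl⟩)
    · exact ⟨hkc, hk⟩
    · exact ⟨Nat.Coprime.mul_left (Nat.coprime_two_left.2 hc) hmc, by omega⟩

theorem disjoint_setOf_coprime_two_mul_image_two_mul (c : ℕ) (s : Set ℕ) :
    Disjoint {k : ℕ | k.Coprime (2 * c) ∧ 0 < k} ((2 * ·) '' s) := by
  rw [disjoint_left]
  rintro _ ⟨hk, -⟩ ⟨m, -, rfl⟩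
  simp only [Nat.coprime_mul_iff_right, Nat.coprime_mul_iff_left, Nat.coprime_two_right] at hk
  exact Nat.not_odd_iff_even.2 (even_two_mul m) hk.1

theorem stmt2 : Eser ^ 4 + Eser = Dser := by
  have hE : Eser = indicatorSeries ((· ^ 2) '' {k | k.Coprime 3 ∧ 0 < k}) :=
    mk_ite_exists_coprime_sq_eq_indicatorSeries 3
  have hD : Dser = indicatorSeries ((· ^ 2) '' {k | k.Coprime (2 * 3) ∧ 0 < k}) :=
    mk_ite_exists_coprime_sq_eq_indicatorSeries 6
  have hE4 : Eser ^ 4 = indicatorSeries ((· ^ 2) '' ((2 * ·) '' {k | k.Coprime 3 ∧ 0 < k})) := by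
    rw [show 4 = 2 ^ 2 from rfl, pow_char_pow_eq_expand, hE,
      expand_indicatorSeries_image_sq 2 two_ne_zero]
  have hsplit : Eser = Dser + Eser ^ 4 := by
    rw [hE4, hD, ← indicatorSeries_union, ← image_union, ← setOf_coprime_eq_union 3 (by decide),
      ← hE]
    exact (disjoint_image_iff (Nat.pow_left_injective two_ne_zero)).2
      (disjoint_setOf_coprime_two_mul_image_two_mul 3 _)
  have hchar : Eser ^ 4 + Eser ^ 4 = 0 := by
    ext n
    rw [map_add, CharTwo.add_self_eq_zero, map_zero]
  linear_combination hsplit + hchar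
end

section
/- Let r = Σ_{n>0} (x^{n²} + x^{2n²} + x^{3n²} + x^{6n²}) in Z/2[[x]], F = Σ_{n odd, n>0} x^{n²}, and G = F(x³). Then r² + r = F + G. -/
open PowerSeries Classical

/-- `Σ_{n > 0} x^{c·n²}` in `Z/2[[x]]`. -/
noncomputable def thetaC (c : ℕ) : PowerSeries (ZMod 2) :=
  PowerSeries.mk fun n => if ∃ k : ℕ, 0 < k ∧ n = c * k ^ 2 then 1 else 0

/-- `r = Σ_{n>0} (x^{n²} + x^{2n²} + x^{3n²} + x^{6n²})` in `Z/2[[x]]`. -/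
noncomputable def rser : PowerSeries (ZMod 2) :=
  thetaC 1 + thetaC 2 + thetaC 3 + thetaC 6

/-- `F = Σ_{n odd, n > 0} x^{n²}` in `Z/2[[x]]`. -/
noncomputable def Fser : PowerSeries (ZMod 2) :=
  PowerSeries.mk fun n => if ∃ k : ℕ, Odd k ∧ 0 < k ∧ n = k ^ 2 then 1 else 0

/-!
In characteristic 2 squaring is the Frobenius, which on `Z/2[[x]]` is `f(x) ↦ f(x²)`; hence
`θ_c² = θ_{2c}` for `θ_c = Σ_{k>0} x^{ck²}`, and `r² + r = θ₁ + θ₃ + θ₄ + θ₁₂` since the terms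
`θ₂, θ₆` appear twice. Splitting `k` by parity gives `θ_c = Σ_{k odd} x^{ck²} + θ_{4c}`, so
`θ₁ + θ₄ = F` and `θ₃ + θ₁₂ = G`.
-/

instance PowerSeries.charP {R : Type*} [CommSemiring R] (p : ℕ) [CharP R p] : CharP R⟦X⟧ p :=
  charP_of_injective_ringHom C_injective p

theorem PowerSeries.pow_char_eq_expand {p : ℕ} [hp : Fact p.Prime] (f : PowerSeries (ZMod p)) :
    f ^ p = expand p hp.out.ne_zero f := by
  rw [← MvPowerSeries.map_frobenius_expand p hp.out.ne_zero, ZMod.frobenius_zmod,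
    MvPowerSeries.map_id]
  rfl

lemma Nat.eq_of_mul_sq_eq_mul_sq {c k m : ℕ} (hc : 0 < c) (h : c * k ^ 2 = c * m ^ 2) : k = m :=
  Nat.pow_left_injective two_ne_zero (Nat.eq_of_mul_eq_mul_left hc h)

noncomputable def oddThetaC (c : ℕ) : PowerSeries (ZMod 2) :=
  PowerSeries.mk fun n => if ∃ k : ℕ, Odd k ∧ 0 < k ∧ n = c * k ^ 2 then 1 else 0

lemma expand_thetaC (c : ℕ) : expand 2 two_ne_zero (thetaC c) = thetaC (2 * c) := by
  ext n
  simp only [coeff_expand, thetaC, coeff_mk]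
  by_cases h : 2 ∣ n
  · obtain ⟨m, rfl⟩ := h
    simp only [dvd_mul_right, if_true, Nat.mul_div_cancel_left m two_pos, mul_assoc,
      Nat.mul_left_cancel_iff two_pos]
  · rw [if_neg h, if_neg]
    rintro ⟨k, -, rfl⟩
    exact h ⟨c * k ^ 2, mul_assoc 2 c _⟩

lemma oddThetaC_add_thetaC (c : ℕ) (hc : 0 < c) : oddThetaC c + thetaC (4 * c) = thetaC c := by
  ext n
  simp only [map_add, oddThetaC, thetaC, coeff_mk]
  by_cases hP : ∃ k, 0 < k ∧ n = c * k ^ 2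
  · obtain ⟨k, hk, rfl⟩ := hP
    rw [if_pos (⟨k, hk, rfl⟩ : ∃ m, 0 < m ∧ c * k ^ 2 = c * m ^ 2)]
    rcases Nat.even_or_odd' k with ⟨j, rfl | rfl⟩
    · have hQ : ¬∃ m, Odd m ∧ 0 < m ∧ c * (2 * j) ^ 2 = c * m ^ 2 := by
        rintro ⟨m, hm, -, he⟩
        rw [← Nat.eq_of_mul_sq_eq_mul_sq hc he] at hm
        exact Nat.not_odd_iff_even.mpr (even_two_mul j) hm
      rw [if_neg hQ, if_pos ⟨j, by omega, by ring⟩, zero_add]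
    · have hR : ¬∃ m, 0 < m ∧ c * (2 * j + 1) ^ 2 = 4 * c * m ^ 2 := by
        rintro ⟨m, -, he⟩
        have := Nat.eq_of_mul_sq_eq_mul_sq hc (he.trans (by ring : 4 * c * m ^ 2 = c * (2 * m) ^ 2))
        omega
      rw [if_pos ⟨_, odd_two_mul_add_one j, hk, rfl⟩, if_neg hR, add_zero]
  · rw [if_neg hP, if_neg, if_neg, add_zero]
    · rintro ⟨m, hm, rfl⟩
      exact hP ⟨2 * m, by omega, by ring⟩
    · rintro ⟨m, -, hm, rfl⟩
      exact hP ⟨m, hm, rfl⟩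

lemma Fser_eq_oddThetaC : Fser = oddThetaC 1 := by
  simp only [Fser, oddThetaC, one_mul]

theorem stmt3 : rser ^ 2 + rser = Fser + Gser := by
  have hF : Fser + thetaC 4 = thetaC 1 := Fser_eq_oddThetaC ▸ oddThetaC_add_thetaC 1 one_pos
  have hG : Gser + thetaC 12 = thetaC 3 := oddThetaC_add_thetaC 3 three_pos
  rw [pow_char_eq_expand, rser]
  simp only [map_add, expand_thetaC, Nat.reduceMul]
  linear_combination -hF - hG +
    (thetaC 2 + thetaC 4 + thetaC 6 + thetaC 12) * (CharTwo.two_eq_zero : (2 : (ZMod 2)⟦X⟧) = 0)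
end

section
/- With r, F, G as above in Z/2[[x]], one has F = r + r² + r³ + r⁴ and G = r³ + r⁴. -/
open PowerSeries Classical

open Finset



private lemma z2_mul_self (a : ZMod 2) : a * a = a := by revert a; decide
private lemma z2_add_self (a : ZMod 2) : a + a = 0 := by revert a; decide

private lemma addSelf (f : PowerSeries (ZMod 2)) : f + f = 0 := by
  ext n; rw [map_add]; exact z2_add_self _

private lemma coeff_sq (f : PowerSeries (ZMod 2)) (n : ℕ) :
    (coeff n) (f ^ 2) = if 2 ∣ n then coeff (n / 2) f else 0 := by
  classical
  rw [sq, coeff_mul]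
  by_cases h : 2 ∣ n
  · obtain ⟨m, rfl⟩ := h
    rw [if_pos ⟨m, rfl⟩]
    have hmem : ((m, m) : ℕ × ℕ) ∈ antidiagonal (2 * m) := by
      rw [Finset.HasAntidiagonal.mem_antidiagonal]; ring
    rw [← Finset.add_sum_erase _ _ hmem]
    have hz : ∑ p ∈ (antidiagonal (2 * m)).erase (m, m),
        (coeff p.1) f * (coeff p.2) f = 0 := by
      apply Finset.sum_involution (fun p _ => (p.2, p.1))
      · intro p _
        simpa [mul_comm] using z2_add_self ((coeff p.1) f * (coeff p.2) f)
      · intro p hp _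
        simp only [mem_erase, Finset.HasAntidiagonal.mem_antidiagonal] at hp
        intro hq
        apply hp.1
        have h1 : p.2 = p.1 := congrArg Prod.fst hq
        have : p.1 = m := by omega
        rw [Prod.ext_iff]; omega
      · intro p hp
        simp only [mem_erase, Finset.HasAntidiagonal.mem_antidiagonal] at hp ⊢
        constructor
        · intro hq
          apply hp.1
          have h1 : p.2 = m := congrArg Prod.fst hq
          rw [Prod.ext_iff]; omega
        · omega
      · intro p _; rfl
    rw [hz, add_zero, z2_mul_self]
    have h2 : 2 * m / 2 = m := by omega
    rw [h2]
  · rw [if_neg h]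
    apply Finset.sum_involution (fun p _ => (p.2, p.1))
    · intro p _
      simpa [mul_comm] using z2_add_self ((coeff p.1) f * (coeff p.2) f)
    · intro p hp _
      rw [Finset.HasAntidiagonal.mem_antidiagonal] at hp
      intro hq
      have h1 : p.2 = p.1 := congrArg Prod.fst hq
      exact h ⟨p.1, by omega⟩
    · intro p hp
      rw [Finset.HasAntidiagonal.mem_antidiagonal] at hp ⊢
      omega
    · intro p _; rfl

private lemma coeff_theta (c n : ℕ) :
    coeff n (thetaC c) = if ∃ k, 0 < k ∧ n = c * k ^ 2 then 1 else 0 := by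
  simp [thetaC, coeff_mk]

private lemma theta_sq (c : ℕ) : thetaC c ^ 2 = thetaC (2 * c) := by
  ext n
  rw [coeff_sq, coeff_theta]
  by_cases h : 2 ∣ n
  · obtain ⟨m, rfl⟩ := h
    rw [if_pos ⟨m, rfl⟩, coeff_theta]
    apply if_congr _ rfl rfl
    constructor
    · rintro ⟨k, hk, he⟩
      refine ⟨k, hk, ?_⟩
      have hm : m = c * k ^ 2 := by omega
      rw [hm]; ring
    · rintro ⟨k, hk, he⟩
      refine ⟨k, hk, ?_⟩
      rw [mul_assoc] at he
      have := Nat.eq_of_mul_eq_mul_left (by norm_num : 0 < 2) he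
      omega
  · rw [if_neg h, coeff_theta, if_neg]
    rintro ⟨k, hk, he⟩
    exact h ⟨c * k ^ 2, by rw [he]; ring⟩

private lemma theta_pow4 (c : ℕ) : thetaC c ^ 4 = thetaC (4 * c) := by
  have h : thetaC c ^ 4 = (thetaC c ^ 2) ^ 2 := by ring
  rw [h, theta_sq, theta_sq]
  have he : 2 * (2 * c) = 4 * c := by ring
  rw [he]

private lemma coeff_F (n : ℕ) :
    coeff n Fser = if ∃ a, a % 2 = 1 ∧ n = a ^ 2 then 1 else 0 := by
  simp only [Fser, coeff_mk]
  apply if_congr _ rfl rfl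
  constructor
  · rintro ⟨k, h1, _, rfl⟩; exact ⟨k, Nat.odd_iff.mp h1, rfl⟩
  · rintro ⟨k, h1, rfl⟩; exact ⟨k, Nat.odd_iff.mpr h1, by omega, rfl⟩

private lemma coeff_G (n : ℕ) :
    coeff n Gser = if ∃ a, a % 2 = 1 ∧ n = 3 * a ^ 2 then 1 else 0 := by
  simp only [Gser, coeff_mk]
  apply if_congr _ rfl rfl
  constructor
  · rintro ⟨k, h1, _, rfl⟩; exact ⟨k, Nat.odd_iff.mp h1, rfl⟩
  · rintro ⟨k, h1, rfl⟩; exact ⟨k, Nat.odd_iff.mpr h1, by omega, rfl⟩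

private lemma sq_inj {a b : ℕ} (h : a ^ 2 = b ^ 2) : a = b :=
  Nat.pow_left_injective (by norm_num) h

private lemma Fser_eq : Fser = thetaC 1 + thetaC 1 ^ 4 := by
  rw [theta_pow4]
  ext n
  rw [map_add, coeff_F, coeff_theta, coeff_theta]
  norm_num
  by_cases hQ : ∃ k, 0 < k ∧ n = k ^ 2
  · obtain ⟨k, hk, rfl⟩ := hQ
    by_cases hk2 : k % 2 = 1
    · have hP : ∃ a, a % 2 = 1 ∧ k ^ 2 = a ^ 2 := ⟨k, hk2, rfl⟩
      have hR : ¬ ∃ m, 0 < m ∧ k ^ 2 = 4 * m ^ 2 := by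
        rintro ⟨m, hm, he⟩
        have h4 : k ^ 2 = (2 * m) ^ 2 := by rw [he]; ring
        have := sq_inj h4
        omega
      rw [if_pos hP, if_pos ⟨k, hk, rfl⟩, if_neg hR, add_zero]
    · obtain ⟨m, rfl⟩ : ∃ m, k = 2 * m := ⟨k / 2, by omega⟩
      have hR : ∃ m', 0 < m' ∧ (2 * m) ^ 2 = 4 * m' ^ 2 := ⟨m, by omega, by ring⟩
      have hP : ¬ ∃ a, a % 2 = 1 ∧ (2 * m) ^ 2 = a ^ 2 := by
        rintro ⟨a, ha, he⟩
        have := sq_inj he.symm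
        omega
      rw [if_neg hP, if_pos ⟨2 * m, hk, rfl⟩, if_pos hR]
      decide
  · have hP : ¬ ∃ a, a % 2 = 1 ∧ n = a ^ 2 := by
      rintro ⟨a, ha, rfl⟩; exact hQ ⟨a, by omega, rfl⟩
    have hR : ¬ ∃ m, 0 < m ∧ n = 4 * m ^ 2 := by
      rintro ⟨m, hm, rfl⟩; exact hQ ⟨2 * m, by omega, by ring⟩
    rw [if_neg hP, if_neg hQ, if_neg hR, add_zero]

private lemma Gser_eq : Gser = thetaC 3 + thetaC 3 ^ 4 := by
  rw [theta_pow4]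
  ext n
  rw [map_add, coeff_G, coeff_theta, coeff_theta]
  norm_num
  by_cases hQ : ∃ k, 0 < k ∧ n = 3 * k ^ 2
  · obtain ⟨k, hk, rfl⟩ := hQ
    by_cases hk2 : k % 2 = 1
    · have hP : ∃ a, a % 2 = 1 ∧ 3 * k ^ 2 = 3 * a ^ 2 := ⟨k, hk2, rfl⟩
      have hR : ¬ ∃ m, 0 < m ∧ 3 * k ^ 2 = 12 * m ^ 2 := by
        rintro ⟨m, hm, he⟩
        have h4 : k ^ 2 = (2 * m) ^ 2 := by
          have : (3 : ℕ) * k ^ 2 = 3 * (2 * m) ^ 2 := by rw [he]; ring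
          exact Nat.eq_of_mul_eq_mul_left (by norm_num) this
        have := sq_inj h4
        omega
      rw [if_pos hP, if_pos ⟨k, hk, rfl⟩, if_neg hR, add_zero]
    · obtain ⟨m, rfl⟩ : ∃ m, k = 2 * m := ⟨k / 2, by omega⟩
      have hR : ∃ m', 0 < m' ∧ 3 * (2 * m) ^ 2 = 12 * m' ^ 2 := ⟨m, by omega, by ring⟩
      have hP : ¬ ∃ a, a % 2 = 1 ∧ 3 * (2 * m) ^ 2 = 3 * a ^ 2 := by
        rintro ⟨a, ha, he⟩
        have h4 : (2 * m) ^ 2 = a ^ 2 := Nat.eq_of_mul_eq_mul_left (by norm_num) he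
        have := sq_inj h4
        omega
      rw [if_neg hP, if_pos ⟨2 * m, hk, rfl⟩, if_pos hR]
      decide
  · have hP : ¬ ∃ a, a % 2 = 1 ∧ n = 3 * a ^ 2 := by
      rintro ⟨a, ha, rfl⟩; exact hQ ⟨a, by omega, rfl⟩
    have hR : ¬ ∃ m, 0 < m ∧ n = 12 * m ^ 2 := by
      rintro ⟨m, hm, rfl⟩; exact hQ ⟨2 * m, by omega, by ring⟩
    rw [if_neg hP, if_neg hQ, if_neg hR, add_zero]

private lemma rser_eq : rser = thetaC 1 + thetaC 1 ^ 2 + thetaC 3 + thetaC 3 ^ 2 := by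
  rw [theta_sq, theta_sq]
  rfl


def flip2 (q : ℕ × ℕ) : ℕ × ℕ :=
  if (q.1 + q.2) / 2 % 2 = 1 then
    ((max q.1 (3 * q.2) - min q.1 (3 * q.2)) / 2, (q.1 + q.2) / 2)
  else ((q.1 + 3 * q.2) / 2, (max q.1 q.2 - min q.1 q.2) / 2)

private lemma flip2_def (a b : ℕ) : flip2 (a, b) =
    if (a + b) / 2 % 2 = 1 then ((max a (3 * b) - min a (3 * b)) / 2, (a + b) / 2)
    else ((a + 3 * b) / 2, (max a b - min a b) / 2) := rfl

private lemma flip2_parity (a b : ℕ) (ha : a % 2 = 1) (hb : b % 2 = 1) :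
    (flip2 (a, b)).1 % 2 = 1 ∧ (flip2 (a, b)).2 % 2 = 1 := by
  rw [flip2_def]
  split_ifs with h <;> constructor <;> simp only [Prod.fst, Prod.snd] <;> omega

private lemma flip2_norm (a b : ℕ) (ha : a % 2 = 1) (hb : b % 2 = 1) :
    (flip2 (a, b)).1 ^ 2 + 3 * (flip2 (a, b)).2 ^ 2 = a ^ 2 + 3 * b ^ 2 := by
  rw [flip2_def]
  split_ifs with h
  · simp only [Prod.fst, Prod.snd]
    rcases le_or_gt (3 * b) a with hle | hlt
    · obtain ⟨A, hA⟩ : ∃ A, a = 2 * A + 3 * b := ⟨(a - 3 * b) / 2, by omega⟩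
      have e1 : (max a (3 * b) - min a (3 * b)) / 2 = A := by omega
      have e2 : (a + b) / 2 = A + 2 * b := by omega
      rw [e1, e2, hA]; ring
    · obtain ⟨A, hA⟩ : ∃ A, 2 * A + a = 3 * b := ⟨(3 * b - a) / 2, by omega⟩
      obtain ⟨B, hB⟩ : ∃ B, a + b = 2 * B := ⟨(a + b) / 2, by omega⟩
      have e1 : (max a (3 * b) - min a (3 * b)) / 2 = A := by omega
      have e2 : (a + b) / 2 = B := by omega
      rw [e1, e2]
      zify at hA hB ⊢
      have h4 : 4 * ((A:ℤ) ^ 2 + 3 * B ^ 2) = 4 * ((a:ℤ) ^ 2 + 3 * b ^ 2) := by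
        linear_combination (2 * (A:ℤ) - a + 3 * b) * hA + (-3 * ((a:ℤ) + b + 2 * B)) * hB
      linarith
  · simp only [Prod.fst, Prod.snd]
    rcases le_or_gt b a with hle | hlt
    · obtain ⟨B, hB⟩ : ∃ B, a = 2 * B + b := ⟨(a - b) / 2, by omega⟩
      have e1 : (a + 3 * b) / 2 = B + 2 * b := by omega
      have e2 : (max a b - min a b) / 2 = B := by omega
      rw [e1, e2, hB]; ring
    · obtain ⟨B, hB⟩ : ∃ B, b = 2 * B + a := ⟨(b - a) / 2, by omega⟩
      have e1 : (a + 3 * b) / 2 = 2 * a + 3 * B := by omega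
      have e2 : (max a b - min a b) / 2 = B := by omega
      rw [e1, e2, hB]; ring

private lemma flip2_invol (a b : ℕ) (ha : a % 2 = 1) (hb : b % 2 = 1) :
    flip2 (flip2 (a, b)) = (a, b) := by
  rw [flip2_def a b]
  split_ifs with h
  · rw [flip2_def]
    split_ifs with h2 <;> simp only [Prod.mk.injEq] <;> constructor <;> omega
  · rw [flip2_def]
    split_ifs with h2 <;> simp only [Prod.mk.injEq] <;> constructor <;> omega

private lemma flip2_fix (a b : ℕ) (ha : a % 2 = 1) (hb : b % 2 = 1) :
    flip2 (a, b) = (a, b) ↔ (a = b ∨ a = 3 * b) := by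
  rw [flip2_def]
  split_ifs with h <;> simp only [Prod.mk.injEq] <;> omega


private lemma sq_ne_three_sq {t s : ℕ} (ht : t % 2 = 1) : t ^ 2 ≠ 3 * s ^ 2 := by
  intro h
  have ht0 : t ≠ 0 := by omega
  have hs0 : s ≠ 0 := by
    rintro rfl
    rw [show 3 * (0:ℕ) ^ 2 = 0 by ring, pow_eq_zero_iff (by norm_num)] at h
    exact ht0 h
  have h3 : (t ^ 2).factorization 3 = (3 * s ^ 2).factorization 3 := by rw [h]
  rw [Nat.factorization_pow,
    Nat.factorization_mul (by norm_num) (pow_ne_zero 2 hs0), Nat.factorization_pow,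
    (Nat.Prime.factorization (by norm_num : Nat.Prime 3))] at h3
  simp only [Finsupp.smul_apply, Finsupp.add_apply, Finsupp.single_eq_same, smul_eq_mul] at h3
  omega

def good (p : ℕ × ℕ) : Prop := ∃ a b : ℕ, a % 2 = 1 ∧ b % 2 = 1 ∧ p = (a ^ 2, 3 * b ^ 2)

noncomputable def gmap (p : ℕ × ℕ) : ℕ × ℕ := by
  classical
  exact if h : good p then
    ((flip2 (Nat.sqrt p.1, Nat.sqrt (p.2 / 3))).1 ^ 2,
      3 * (flip2 (Nat.sqrt p.1, Nat.sqrt (p.2 / 3))).2 ^ 2)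
  else p

private lemma gmap_not {p : ℕ × ℕ} (h : ¬ good p) : gmap p = p := by
  rw [gmap, dif_neg h]

private lemma gmap_good {a b : ℕ} (ha : a % 2 = 1) (hb : b % 2 = 1) :
    gmap (a ^ 2, 3 * b ^ 2) = ((flip2 (a, b)).1 ^ 2, 3 * (flip2 (a, b)).2 ^ 2) := by
  have hg : good (a ^ 2, 3 * b ^ 2) := ⟨a, b, ha, hb, rfl⟩
  rw [gmap, dif_pos hg]
  have h1 : Nat.sqrt ((a ^ 2, 3 * b ^ 2).1) = a := Nat.sqrt_eq' a
  have h2 : ((a ^ 2, 3 * b ^ 2).2) / 3 = b ^ 2 := by omega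
  rw [h1, h2, Nat.sqrt_eq']

private lemma gmap_pack {p : ℕ × ℕ} (h : good p) :
    good (gmap p) ∧ (gmap p).1 + (gmap p).2 = p.1 + p.2 ∧ gmap (gmap p) = p ∧
      (gmap p = p ↔ ((∃ a, a % 2 = 1 ∧ p = (a ^ 2, 3 * a ^ 2)) ∨
        (∃ b, b % 2 = 1 ∧ p = (9 * b ^ 2, 3 * b ^ 2)))) := by
  obtain ⟨a, b, ha, hb, rfl⟩ := h
  obtain ⟨hA, hB⟩ := flip2_parity a b ha hb
  rw [gmap_good ha hb]
  refine ⟨⟨_, _, hA, hB, rfl⟩, ?_, ?_, ?_⟩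
  · have := flip2_norm a b ha hb
    simp only [Prod.fst, Prod.snd]
    omega
  · rw [gmap_good hA hB]
    have he : ((flip2 (a, b)).1, (flip2 (a, b)).2) = flip2 (a, b) := rfl
    rw [he, flip2_invol a b ha hb]
  · constructor
    · intro hfix
      simp only [Prod.mk.injEq] at hfix
      have e1 : (flip2 (a, b)).1 = a := sq_inj hfix.1
      have e2 : (flip2 (a, b)).2 = b := sq_inj (by omega)
      have : flip2 (a, b) = (a, b) := Prod.ext_iff.mpr ⟨e1, e2⟩
      rcases (flip2_fix a b ha hb).mp this with h1 | h1
      · exact Or.inl ⟨a, ha, by rw [h1]⟩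
      · refine Or.inr ⟨b, hb, ?_⟩
        rw [h1]
        have : (3 * b) ^ 2 = 9 * b ^ 2 := by ring
        rw [this]
    · intro hc
      have hfix : flip2 (a, b) = (a, b) := by
        apply (flip2_fix a b ha hb).mpr
        rcases hc with ⟨t, _, he⟩ | ⟨s, _, he⟩
        · simp only [Prod.mk.injEq] at he
          have : a = t := sq_inj he.1
          have hb3 : b = t := sq_inj (by omega)
          omega
        · simp only [Prod.mk.injEq] at he
          have h9 : a ^ 2 = (3 * s) ^ 2 := by rw [he.1]; ring
          have : a = 3 * s := sq_inj h9
          have hb3 : b = s := sq_inj (by omega)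
          omega
      rw [hfix]


noncomputable def fc (p : ℕ × ℕ) : ZMod 2 :=
  (if ∃ a, a % 2 = 1 ∧ p.1 = a ^ 2 then 1 else 0) *
  (if ∃ b, b % 2 = 1 ∧ p.2 = 3 * b ^ 2 then 1 else 0)

private lemma fc_good {p : ℕ × ℕ} (h : good p) : fc p = 1 := by
  obtain ⟨a, b, ha, hb, rfl⟩ := h
  rw [fc, if_pos ⟨a, ha, rfl⟩, if_pos ⟨b, hb, rfl⟩, one_mul]

private lemma fc_ne {p : ℕ × ℕ} (h : fc p ≠ 0) : good p := by
  rw [fc] at h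
  by_cases h1 : ∃ a, a % 2 = 1 ∧ p.1 = a ^ 2
  · by_cases h2 : ∃ b, b % 2 = 1 ∧ p.2 = 3 * b ^ 2
    · obtain ⟨a, ha, he1⟩ := h1
      obtain ⟨b, hb, he2⟩ := h2
      exact ⟨a, b, ha, hb, Prod.ext_iff.mpr ⟨he1, he2⟩⟩
    · exact absurd (by rw [if_neg h2, mul_zero]) h
  · exact absurd (by rw [if_neg h1, zero_mul]) h

private lemma fc_gmap (p : ℕ × ℕ) : fc (gmap p) = fc p := by
  by_cases h : good p
  · rw [fc_good (gmap_pack h).1, fc_good h]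
  · rw [gmap_not h]

private lemma key_count (n : ℕ) :
    (∑ p ∈ antidiagonal n, fc p)
    = (if ∃ t, t % 2 = 1 ∧ n = 4 * t ^ 2 then (1 : ZMod 2) else 0)
      + (if ∃ s, s % 2 = 1 ∧ n = 12 * s ^ 2 then (1 : ZMod 2) else 0) := by
  classical
  by_cases hP : ∃ t, t % 2 = 1 ∧ n = 4 * t ^ 2
  · obtain ⟨t, ht, rfl⟩ := hP
    have hQ : ¬ ∃ s, s % 2 = 1 ∧ 4 * t ^ 2 = 12 * s ^ 2 := by
      rintro ⟨s, hs, he⟩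
      have h12 : (4:ℕ) * t ^ 2 = 4 * (3 * s ^ 2) := by rw [he]; ring
      exact sq_ne_three_sq ht (Nat.eq_of_mul_eq_mul_left (by norm_num) h12)
    rw [if_pos ⟨t, ht, rfl⟩, if_neg hQ, add_zero]
    have hgood0 : good (t ^ 2, 3 * t ^ 2) := ⟨t, t, ht, ht, rfl⟩
    have hfix0 : gmap (t ^ 2, 3 * t ^ 2) = (t ^ 2, 3 * t ^ 2) :=
      (gmap_pack hgood0).2.2.2.mpr (Or.inl ⟨t, ht, rfl⟩)
    have hp0 : ((t ^ 2, 3 * t ^ 2) : ℕ × ℕ) ∈ antidiagonal (4 * t ^ 2) := by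
      rw [Finset.HasAntidiagonal.mem_antidiagonal]; ring
    rw [← Finset.add_sum_erase _ _ hp0, fc_good hgood0]
    have hzero : ∑ p ∈ (antidiagonal (4 * t ^ 2)).erase (t ^ 2, 3 * t ^ 2), fc p = 0 := by
      apply Finset.sum_involution (fun p _ => gmap p)
      · intro p _
        rw [fc_gmap]; exact z2_add_self _
      · intro p hp hfc
        obtain ⟨a, b, ha, hb, rfl⟩ := fc_ne hfc
        simp only [mem_erase, Finset.HasAntidiagonal.mem_antidiagonal] at hp
        intro hfix
        rcases ((gmap_pack ⟨a, b, ha, hb, rfl⟩).2.2.2.mp hfix) with ⟨c, hc, he⟩ | ⟨c, hc, he⟩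
        · simp only [Prod.mk.injEq] at he
          have h4 : (4:ℕ) * c ^ 2 = 4 * t ^ 2 := by
            have := hp.2
            rw [he.1, he.2] at this
            linarith
          have : c = t := sq_inj (Nat.eq_of_mul_eq_mul_left (by norm_num) h4)
          subst this
          exact hp.1 (by rw [he.1, he.2])
        · simp only [Prod.mk.injEq] at he
          have h4 : (4:ℕ) * t ^ 2 = 4 * (3 * c ^ 2) := by
            have := hp.2
            rw [he.1, he.2] at this
            linarith
          exact sq_ne_three_sq ht (Nat.eq_of_mul_eq_mul_left (by norm_num) h4)
      · intro p hp
        simp only [mem_erase, Finset.HasAntidiagonal.mem_antidiagonal] at hp ⊢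
        by_cases h : good p
        · obtain hpack := gmap_pack h
          refine ⟨?_, by rw [hpack.2.1]; exact hp.2⟩
          intro he
          apply hp.1
          have : gmap (gmap p) = gmap (t ^ 2, 3 * t ^ 2) := by rw [he]
          rw [hpack.2.2.1, hfix0] at this
          exact this
        · rw [gmap_not h]; exact hp
      · intro p _
        by_cases h : good p
        · exact (gmap_pack h).2.2.1
        · rw [gmap_not h, gmap_not h]
    rw [hzero, add_zero]
  · by_cases hQ : ∃ s, s % 2 = 1 ∧ n = 12 * s ^ 2
    · obtain ⟨s, hs, rfl⟩ := hQ
      rw [if_neg hP, if_pos ⟨s, hs, rfl⟩, zero_add]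
      have h3s : (3 * s) % 2 = 1 := by omega
      have hgood0 : good (9 * s ^ 2, 3 * s ^ 2) :=
        ⟨3 * s, s, h3s, hs, by rw [Prod.mk.injEq]; constructor <;> ring⟩
      have hfix0 : gmap (9 * s ^ 2, 3 * s ^ 2) = (9 * s ^ 2, 3 * s ^ 2) :=
        (gmap_pack hgood0).2.2.2.mpr (Or.inr ⟨s, hs, rfl⟩)
      have hp0 : ((9 * s ^ 2, 3 * s ^ 2) : ℕ × ℕ) ∈ antidiagonal (12 * s ^ 2) := by
        rw [Finset.HasAntidiagonal.mem_antidiagonal]; ring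
      rw [← Finset.add_sum_erase _ _ hp0, fc_good hgood0]
      have hzero : ∑ p ∈ (antidiagonal (12 * s ^ 2)).erase (9 * s ^ 2, 3 * s ^ 2), fc p = 0 := by
        apply Finset.sum_involution (fun p _ => gmap p)
        · intro p _
          rw [fc_gmap]; exact z2_add_self _
        · intro p hp hfc
          obtain ⟨a, b, ha, hb, rfl⟩ := fc_ne hfc
          simp only [mem_erase, Finset.HasAntidiagonal.mem_antidiagonal] at hp
          intro hfix
          rcases ((gmap_pack ⟨a, b, ha, hb, rfl⟩).2.2.2.mp hfix) with ⟨c, hc, he⟩ | ⟨c, hc, he⟩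
          · simp only [Prod.mk.injEq] at he
            have h4 : (4:ℕ) * (3 * s ^ 2) = 4 * c ^ 2 := by
              have := hp.2
              rw [he.1, he.2] at this
              linarith
            exact sq_ne_three_sq hc (Nat.eq_of_mul_eq_mul_left (by norm_num) h4).symm
          · simp only [Prod.mk.injEq] at he
            have h4 : (12:ℕ) * c ^ 2 = 12 * s ^ 2 := by
              have := hp.2
              rw [he.1, he.2] at this
              linarith
            have : c = s := sq_inj (Nat.eq_of_mul_eq_mul_left (by norm_num) h4)
            subst this
            exact hp.1 (by rw [he.1, he.2])
        · intro p hp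
          simp only [mem_erase, Finset.HasAntidiagonal.mem_antidiagonal] at hp ⊢
          by_cases h : good p
          · obtain hpack := gmap_pack h
            refine ⟨?_, by rw [hpack.2.1]; exact hp.2⟩
            intro he
            apply hp.1
            have : gmap (gmap p) = gmap (9 * s ^ 2, 3 * s ^ 2) := by rw [he]
            rw [hpack.2.2.1, hfix0] at this
            exact this
          · rw [gmap_not h]; exact hp
        · intro p _
          by_cases h : good p
          · exact (gmap_pack h).2.2.1
          · rw [gmap_not h, gmap_not h]
      rw [hzero, add_zero]
    · rw [if_neg hP, if_neg hQ, add_zero]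
      apply Finset.sum_involution (fun p _ => gmap p)
      · intro p _
        rw [fc_gmap]; exact z2_add_self _
      · intro p hp hfc
        obtain ⟨a, b, ha, hb, rfl⟩ := fc_ne hfc
        rw [Finset.HasAntidiagonal.mem_antidiagonal] at hp
        intro hfix
        rcases ((gmap_pack ⟨a, b, ha, hb, rfl⟩).2.2.2.mp hfix) with ⟨c, hc, he⟩ | ⟨c, hc, he⟩
        · simp only [Prod.mk.injEq] at he
          apply hP
          refine ⟨c, hc, ?_⟩
          rw [← hp, he.1, he.2]; ring
        · simp only [Prod.mk.injEq] at he
          apply hQ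
          refine ⟨c, hc, ?_⟩
          rw [← hp, he.1, he.2]; ring
      · intro p hp
        rw [Finset.HasAntidiagonal.mem_antidiagonal] at hp ⊢
        by_cases h : good p
        · rw [(gmap_pack h).2.1]; exact hp
        · rw [gmap_not h]; exact hp
      · intro p _
        by_cases h : good p
        · exact (gmap_pack h).2.2.1
        · rw [gmap_not h, gmap_not h]

private lemma coeff_pow4 (f : PowerSeries (ZMod 2)) (n : ℕ) :
    coeff n (f ^ 4) = if 4 ∣ n then coeff (n / 4) f else 0 := by
  have h : f ^ 4 = (f ^ 2) ^ 2 := by ring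
  rw [h, coeff_sq]
  by_cases h2 : 2 ∣ n
  · rw [if_pos h2, coeff_sq]
    by_cases h4 : 4 ∣ n
    · rw [if_pos (by omega : 2 ∣ n / 2), if_pos h4]
      have he : n / 2 / 2 = n / 4 := by omega
      rw [he]
    · rw [if_neg (by omega : ¬ 2 ∣ n / 2), if_neg h4]
  · rw [if_neg h2, if_neg (by omega : ¬ 4 ∣ n)]

private lemma coeff_F4 (n : ℕ) : coeff n (Fser ^ 4) =
    if ∃ t, t % 2 = 1 ∧ n = 4 * t ^ 2 then 1 else 0 := by
  rw [coeff_pow4]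
  by_cases h : 4 ∣ n
  · rw [if_pos h, coeff_F]
    apply if_congr _ rfl rfl
    constructor
    · rintro ⟨a, ha, he⟩
      refine ⟨a, ha, ?_⟩
      have h1 : n = 4 * (n / 4) := by omega
      rw [h1, he]
    · rintro ⟨t, ht, rfl⟩
      exact ⟨t, ht, Nat.mul_div_cancel_left (t ^ 2) (show 0 < 4 by norm_num)⟩
  · rw [if_neg h, eq_comm, if_neg]
    rintro ⟨t, ht, rfl⟩
    exact h ⟨t ^ 2, rfl⟩

private lemma coeff_G4 (n : ℕ) : coeff n (Gser ^ 4) =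
    if ∃ s, s % 2 = 1 ∧ n = 12 * s ^ 2 then 1 else 0 := by
  rw [coeff_pow4]
  by_cases h : 4 ∣ n
  · rw [if_pos h, coeff_G]
    apply if_congr _ rfl rfl
    constructor
    · rintro ⟨a, ha, he⟩
      refine ⟨a, ha, ?_⟩
      have h1 : n = 4 * (n / 4) := by omega
      rw [h1, he]; ring
    · rintro ⟨s, hs, rfl⟩
      refine ⟨s, hs, ?_⟩
      have h1 : (12 : ℕ) * s ^ 2 = 4 * (3 * s ^ 2) := by ring
      rw [h1, Nat.mul_div_cancel_left _ (by norm_num : 0 < 4)]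
  · rw [if_neg h, eq_comm, if_neg]
    rintro ⟨s, hs, rfl⟩
    exact h ⟨3 * s ^ 2, by ring⟩

private lemma keyFG : Fser * Gser = Fser ^ 4 + Gser ^ 4 := by
  ext n
  rw [coeff_mul, map_add, coeff_F4, coeff_G4, ← key_count n]
  apply Finset.sum_congr rfl
  intro p _
  rw [coeff_F, coeff_G, fc]

private lemma theta0 (c : ℕ) (hc : 0 < c) : coeff 0 (thetaC c) = 0 := by
  rw [coeff_theta, if_neg]
  rintro ⟨k, hk, he⟩
  have : 0 < c * k ^ 2 := by positivity
  omega

private lemma coeff0_r : coeff 0 rser = 0 := by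
  rw [rser, map_add, map_add, map_add, theta0 1 (by norm_num), theta0 2 (by norm_num),
    theta0 3 (by norm_num), theta0 6 (by norm_num)]
  decide

private lemma coeff1_F : coeff 1 Fser = 1 := by
  rw [coeff_F, if_pos ⟨1, by norm_num, by norm_num⟩]

private lemma coeff1_G : coeff 1 Gser = 0 := by
  rw [coeff_G, if_neg]
  rintro ⟨a, ha, he⟩
  have h1 : 1 ≤ a := by omega
  nlinarith

theorem stmt4 :
    Fser = rser + rser ^ 2 + rser ^ 3 + rser ^ 4 ∧ Gser = rser ^ 3 + rser ^ 4 := by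
  have h2 : (2 : PowerSeries (ZMod 2)) = 0 := by
    have h1 := addSelf (1 : PowerSeries (ZMod 2))
    rwa [one_add_one_eq_two] at h1
  have hPhi : rser + rser ^ 2 = Fser + Gser := by
    rw [rser_eq, Fser_eq, Gser_eq]
    linear_combination ((thetaC 1) ^ 2 + (thetaC 3) ^ 2 + (thetaC 1) ^ 3 +
      (thetaC 1) * (thetaC 3) + (thetaC 1) * (thetaC 3) ^ 2 + (thetaC 1) ^ 2 * (thetaC 3) +
      (thetaC 1) ^ 2 * (thetaC 3) ^ 2 + (thetaC 3) ^ 3) * h2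
  have hS : rser ^ 2 + (rser ^ 2) ^ 2 = (Fser + Gser) ^ 2 := by
    linear_combination (rser + rser ^ 2 + Fser + Gser) * hPhi - rser ^ 3 * h2
  have hG2 : Gser ^ 2 + (Fser + Gser) * Gser = (Fser + Gser) ^ 4 := by
    linear_combination keyFG + (Gser ^ 2 - 2 * Fser ^ 3 * Gser - 3 * Fser ^ 2 * Gser ^ 2
      - 2 * Fser * Gser ^ 3) * h2
  have hquad : (Gser + (Fser + Gser) * rser ^ 2) *
      ((Gser + (Fser + Gser) * rser ^ 2) + (Fser + Gser)) = 0 := by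
    linear_combination hG2 + (Fser + Gser) ^ 2 * hS +
      ((Fser + Gser) * rser ^ 2 * Gser + (Fser + Gser) ^ 4) * h2
  rcases mul_eq_zero.mp hquad with hy | hy
  · have hGr : Gser = rser ^ 3 + rser ^ 4 := by
      linear_combination hy - rser ^ 2 * hPhi - (Fser + Gser) * rser ^ 2 * h2
    refine ⟨?_, hGr⟩
    linear_combination -hPhi - hGr - (rser ^ 3 + rser ^ 4) * h2
  · exfalso
    have h1 : coeff 1
        (Gser + (Fser + Gser) * rser ^ 2 + (Fser + Gser)) = 0 := by
      rw [hy, map_zero]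
    have hc1 : coeff 1 ((Fser + Gser) * rser ^ 2) = 0 := by
      rw [coeff_mul]
      have hanti : Finset.HasAntidiagonal.antidiagonal 1 = {((0 : ℕ), (1 : ℕ)), (1, 0)} := by decide
      rw [hanti, Finset.sum_pair (by decide)]
      have hr2_1 : coeff 1 (rser ^ 2) = 0 := by
        rw [coeff_sq, if_neg (by omega)]
      have hr2_0 : coeff 0 (rser ^ 2) = 0 := by
        rw [coeff_sq, if_pos ⟨0, rfl⟩]
        exact coeff0_r
      simp [hr2_1, hr2_0]
    rw [map_add, map_add, map_add, hc1, coeff1_F, coeff1_G] at h1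
    simp at h1
end

section
/- Let g : ℕ → ℕ be the unique function satisfying g(0) = 0, g(2n) = 4·g(n) and g(2n+1) = g(2n) + 1. Then for all r, s ∈ ℕ, g(r+s) ≥ g(r) + g(s). -/
/-! Halving both arguments: `g (2 * a + i) = 4 * g a + i` for `i ≤ 1`, so the inequality for
`(r, s)` follows from the one for `(r / 2, s / 2)`. When `r` and `s` are both odd the sum carries,
`g (r + s) = 4 * g (r / 2 + s / 2 + 1)`, and `g n < g (n + 1)` pays for the two lost units. -/

structure MoserDeBruijnRec (g : ℕ → ℕ) : Prop where
  map_two_mul : ∀ n, g (2 * n) = 4 * g n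
  map_two_mul_add_one : ∀ n, g (2 * n + 1) = g (2 * n) + 1

namespace MoserDeBruijnRec

variable {g : ℕ → ℕ}

theorem map_zero (hg : MoserDeBruijnRec g) : g 0 = 0 := by
  have h := hg.map_two_mul 0
  rw [mul_zero] at h
  omega

theorem map_two_mul_add_one_eq (hg : MoserDeBruijnRec g) (n : ℕ) : g (2 * n + 1) = 4 * g n + 1 := by
  rw [hg.map_two_mul_add_one, hg.map_two_mul]

theorem lt_succ (hg : MoserDeBruijnRec g) (n : ℕ) : g n < g (n + 1) := by
  induction n using Nat.strong_induction_on with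
  | _ n ih =>
    obtain ⟨m, rfl | rfl⟩ := n.even_or_odd'
    · rw [hg.map_two_mul_add_one]
      omega
    · have hm := ih m (by omega)
      rw [show 2 * m + 1 + 1 = 2 * (m + 1) by ring, hg.map_two_mul, hg.map_two_mul_add_one_eq]
      omega

theorem superadditive (hg : MoserDeBruijnRec g) (r s : ℕ) : g r + g s ≤ g (r + s) := by
  induction r using Nat.evenOddRec generalizing s with
  | h0 => simp [hg.map_zero]
  | h_even a ih =>
    obtain ⟨b, rfl | rfl⟩ := s.even_or_odd'
    · rw [← mul_add]
      simp only [hg.map_two_mul]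
      have := ih b
      omega
    · rw [show 2 * a + (2 * b + 1) = 2 * (a + b) + 1 by ring]
      simp only [hg.map_two_mul_add_one_eq, hg.map_two_mul]
      have := ih b
      omega
  | h_odd a ih =>
    obtain ⟨b, rfl | rfl⟩ := s.even_or_odd'
    · rw [show 2 * a + 1 + 2 * b = 2 * (a + b) + 1 by ring]
      simp only [hg.map_two_mul_add_one_eq, hg.map_two_mul]
      have := ih b
      omega
    · rw [show 2 * a + 1 + (2 * b + 1) = 2 * (a + b + 1) by ring]
      simp only [hg.map_two_mul_add_one_eq, hg.map_two_mul]
      have := ih b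
      have := hg.lt_succ (a + b)
      omega

end MoserDeBruijnRec

theorem stmt9_general (g : ℕ → ℕ)
    (heven : ∀ n, g (2 * n) = 4 * g n)
    (hodd : ∀ n, g (2 * n + 1) = g (2 * n) + 1) :
    ∀ r s : ℕ, g r + g s ≤ g (r + s) :=
  MoserDeBruijnRec.superadditive ⟨heven, hodd⟩

/-- If `g : ℕ → ℕ` satisfies `g(0) = 0`, `g(2n) = 4·g(n)` and `g(2n+1) = g(2n) + 1`
(such a `g` is unique), then `g` is super-additive: `g(r+s) ≥ g(r) + g(s)`. -/
theorem stmt9 (g : ℕ → ℕ) (h0 : g 0 = 0)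
    (heven : ∀ n, g (2 * n) = 4 * g n)
    (hodd : ∀ n, g (2 * n + 1) = g (2 * n) + 1) :
    ∀ r s : ℕ, g r + g s ≤ g (r + s) :=
  stmt9_general g heven hodd
end

section
/- Let g : ℕ → ℕ satisfy g(2n) = 4g(n), g(2n+1) = g(2n)+1. Then the map (a,b) ↦ 1 + 2g(a) + 4g(b) is an injection from ℕ × ℕ into the positive odd integers, and moreover it is a bijection onto the positive odd integers. -/
/-!
Writing `G (a, b) = g a + 2 * g b`, the recursion for `g` gives
`G (a, b) = a % 2 + 2 * G (b, a / 2)`: the binary digits of `G (a, b)` are those of `a` and `b`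
interleaved. Reading off the last digit and recursing on `G / 2` shows that `G` is a bijection
`ℕ × ℕ → ℕ`, and `1 + 2 * G` is then a bijection onto the positive odd numbers.
-/

theorem eq_four_mul_div_two_add_mod_two {g : ℕ → ℕ} (heven : ∀ n, g (2 * n) = 4 * g n)
    (hodd : ∀ n, g (2 * n + 1) = g (2 * n) + 1) (n : ℕ) :
    g n = 4 * g (n / 2) + n % 2 := by
  rcases Nat.even_or_odd' n with ⟨k, rfl | rfl⟩
  · rw [heven, Nat.mul_div_cancel_left k two_pos, Nat.mul_mod_right, Nat.add_zero]
  · rw [hodd, heven, show (2 * k + 1) / 2 = k by omega]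
    omega

section Interleave

variable {g : ℕ → ℕ}

theorem eq_zero_of_apply_eq_zero (hg : ∀ n, g n = 4 * g (n / 2) + n % 2) {n : ℕ}
    (hn : g n = 0) : n = 0 := by
  induction n using Nat.strong_induction_on with
  | _ n ih =>
    by_contra hpos
    have := hg n
    have := ih (n / 2) (by omega) (by omega)
    omega

theorem interleave_eq (hg : ∀ n, g n = 4 * g (n / 2) + n % 2) (a b : ℕ) :
    g a + 2 * g b = a % 2 + 2 * (g b + 2 * g (a / 2)) := by
  rw [hg a]
  ring

theorem interleave_injective (hg : ∀ n, g n = 4 * g (n / 2) + n % 2) :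
    Function.Injective (fun p : ℕ × ℕ => g p.1 + 2 * g p.2) := by
  suffices h : ∀ N (p q : ℕ × ℕ), g p.1 + 2 * g p.2 = N → g q.1 + 2 * g q.2 = N → p = q
    from fun p q hpq => h _ p q hpq rfl
  intro N
  induction N using Nat.strong_induction_on with
  | _ N ih =>
    rintro ⟨a, b⟩ ⟨a', b'⟩ hN hN'
    dsimp only at hN hN'
    rcases Nat.eq_zero_or_pos N with rfl | hpos
    · have := eq_zero_of_apply_eq_zero hg (n := a) (by omega)
      have := eq_zero_of_apply_eq_zero hg (n := b) (by omega)
      have := eq_zero_of_apply_eq_zero hg (n := a') (by omega)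
      have := eq_zero_of_apply_eq_zero hg (n := b') (by omega)
      simp only [Prod.mk.injEq]
      omega
    · rw [interleave_eq hg] at hN hN'
      have hhalf := ih (N / 2) (by omega) (b, a / 2) (b', a' / 2) (by dsimp only; omega)
        (by dsimp only; omega)
      simp only [Prod.mk.injEq] at hhalf ⊢
      omega

theorem interleave_surjective (hg : ∀ n, g n = 4 * g (n / 2) + n % 2) :
    Function.Surjective (fun p : ℕ × ℕ => g p.1 + 2 * g p.2) := by
  intro N
  induction N using Nat.strong_induction_on with
  | _ N ih =>
    rcases Nat.eq_zero_or_pos N with rfl | hpos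
    · exact ⟨(0, 0), by have := hg 0; simp only [Nat.zero_div] at this ⊢; omega⟩
    · obtain ⟨⟨b, a⟩, hba⟩ := ih (N / 2) (by omega)
      refine ⟨(2 * a + N % 2, b), ?_⟩
      dsimp only at hba ⊢
      rw [interleave_eq hg, show (2 * a + N % 2) / 2 = a by omega]
      omega

end Interleave

theorem stmt10_general (g : ℕ → ℕ)
    (heven : ∀ n, g (2 * n) = 4 * g n)
    (hodd : ∀ n, g (2 * n + 1) = g (2 * n) + 1) :
    Function.Injective (fun p : ℕ × ℕ => 1 + 2 * g p.1 + 4 * g p.2) ∧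
    (∀ p : ℕ × ℕ, Odd (1 + 2 * g p.1 + 4 * g p.2) ∧ 0 < 1 + 2 * g p.1 + 4 * g p.2) ∧
    (∀ m : ℕ, Odd m → 0 < m → ∃ p : ℕ × ℕ, 1 + 2 * g p.1 + 4 * g p.2 = m) := by
  have hg := eq_four_mul_div_two_add_mod_two heven hodd
  refine ⟨fun p q hpq => interleave_injective hg ?_, fun p => ⟨?_, ?_⟩, ?_⟩
  · dsimp only at hpq ⊢
    omega
  · exact ⟨g p.1 + 2 * g p.2, by ring⟩
  · omega
  · rintro m ⟨k, rfl⟩ -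
    obtain ⟨p, hp⟩ := interleave_surjective hg k
    exact ⟨p, by dsimp only at hp; omega⟩

/-- Let `g : ℕ → ℕ` satisfy `g(0) = 0`, `g(2n) = 4·g(n)`, `g(2n+1) = g(2n) + 1`.
Then `(a,b) ↦ 1 + 2·g(a) + 4·g(b)` is an injection of `ℕ × ℕ` into the positive odd
integers, and is moreover a bijection onto the positive odd integers. -/
theorem stmt10 (g : ℕ → ℕ) (h0 : g 0 = 0)
    (heven : ∀ n, g (2 * n) = 4 * g n)
    (hodd : ∀ n, g (2 * n + 1) = g (2 * n) + 1) :
    Function.Injective (fun p : ℕ × ℕ => 1 + 2 * g p.1 + 4 * g p.2) ∧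
    (∀ p : ℕ × ℕ, Odd (1 + 2 * g p.1 + 4 * g p.2) ∧ 0 < 1 + 2 * g p.1 + 4 * g p.2) ∧
    (∀ m : ℕ, Odd m → 0 < m → ∃ p : ℕ × ℕ, 1 + 2 * g p.1 + 4 * g p.2 = m) :=
  stmt10_general g heven hodd
end

section
/- Fix a power q of 2. On ideals I of Z[i] of odd norm, say (α) is Gauss-equivalent to (β) if there exists an integer N with Nα ≡ β mod 4q in Z[i] (where α, β are normalized generators of the form a + 2bi with a odd). Then the set of Gauss-classes, under ideal multiplication, forms a cyclic group of order 2q. -/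
open GaussianInt

/-- Gauss-equivalence (level `4q`) on (normalized generators of) ideals of odd norm in
`Z[i]` : `α ~ β` iff `N·α ≡ β (mod 4q)` for some integer `N`. -/
def GaussEq (q : ℕ) (α β : GaussianInt) : Prop :=
  ∃ N : ℤ, ((4 * q : ℤ) : GaussianInt) ∣ ((N : GaussianInt) * α - β)

/- ## Auxiliary lemmas -/

private lemma odd_coprime_two {a : ℤ} (ha : Odd a) : IsCoprime a 2 := by
  obtain ⟨t, ht⟩ := ha
  exact ⟨1, -t, by rw [ht]; ring⟩

private lemma odd_unit_zmod (k : ℕ) {a : ℤ} (ha : Odd a) :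
    IsUnit ((a : ZMod (2 ^ k))) := by
  obtain ⟨u, v, huv⟩ := (odd_coprime_two ha).pow_right (n := k)
  have h0 : ((2 : ZMod (2 ^ k)) ^ k) = 0 := by
    have := ZMod.natCast_self (2 ^ k)
    push_cast at this
    exact this
  have h1 : ((u * a + v * 2 ^ k : ℤ) : ZMod (2 ^ k)) = 1 := by rw [huv]; simp
  push_cast at h1
  rw [h0, mul_zero, add_zero] at h1
  exact IsUnit.of_mul_eq_one _ (by rw [mul_comm]; exact h1)

private lemma exists_N (k : ℕ) {a : ℤ} (b : ℤ) (ha : Odd a) :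
    ∃ N : ℤ, ((2:ℤ) ^ k) ∣ N * a - b := by
  obtain ⟨u, v, huv⟩ := (odd_coprime_two ha).pow_right (n := k)
  exact ⟨u * b, ⟨-(b * v), by linear_combination b * huv⟩⟩

/-- The cross-multiplied characterization of Gauss-equivalence. -/
private lemma gaussEq_iff (e q : ℕ) (hq : q = 2 ^ e) {α β : GaussianInt} (hα : Odd α.re) :
    GaussEq q α β ↔ (4 * (q:ℤ)) ∣ (α.im * β.re - β.im * α.re) := by
  have h4q : (4 * (q:ℤ)) = 2 ^ (e + 2) := by subst hq; push_cast; ring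
  constructor
  · rintro ⟨N, hN⟩
    rw [Zsqrtd.intCast_dvd] at hN
    obtain ⟨h1, h2⟩ := hN
    simp only [Zsqrtd.re_sub, Zsqrtd.im_sub, Zsqrtd.re_mul, Zsqrtd.im_mul,
      Zsqrtd.re_intCast, Zsqrtd.im_intCast, zero_mul, mul_zero, add_zero, zero_add] at h1 h2
    have h3 : α.im * β.re - β.im * α.re
        = α.re * (N * α.im - β.im) - α.im * (N * α.re - β.re) := by ring
    rw [h3]
    exact dvd_sub (h2.mul_left _) (h1.mul_left _)
  · intro hD
    obtain ⟨N, hN⟩ := exists_N (e + 2) β.re hα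
    rw [← h4q] at hN
    have h2 : (4 * (q:ℤ)) ∣ α.re * (N * α.im - β.im) := by
      have heq : α.re * (N * α.im - β.im)
          = α.im * (N * α.re - β.re) + (α.im * β.re - β.im * α.re) := by ring
      rw [heq]
      exact dvd_add (hN.mul_left _) hD
    have hcop : IsCoprime (4 * (q:ℤ)) α.re := by
      rw [h4q]
      exact ((odd_coprime_two hα).pow_right (n := e + 2)).symm
    have h3 : (4 * (q:ℤ)) ∣ N * α.im - β.im := hcop.dvd_of_dvd_mul_left h2
    refine ⟨N, ?_⟩
    rw [Zsqrtd.intCast_dvd]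
    constructor
    · simpa only [Zsqrtd.re_sub, Zsqrtd.re_mul, Zsqrtd.re_intCast, Zsqrtd.im_intCast,
        zero_mul, mul_zero, add_zero] using hN
    · simpa only [Zsqrtd.im_sub, Zsqrtd.im_mul, Zsqrtd.re_intCast, Zsqrtd.im_intCast,
        zero_mul, mul_zero, add_zero, zero_add] using h3

private lemma mul_parity {α β : GaussianInt} (h1 : Odd α.re) (h2 : Even α.im)
    (h3 : Odd β.re) (h4 : Even β.im) : Odd ((α * β).re) ∧ Even ((α * β).im) := by
  obtain ⟨s, hs⟩ := h1; obtain ⟨u, hu⟩ := h2; obtain ⟨t, ht⟩ := h3; obtain ⟨v, hv⟩ := h4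
  rw [Zsqrtd.re_mul, Zsqrtd.im_mul]
  constructor
  · exact ⟨2*s*t + s + t - 2*u*v, by rw [hs, ht, hu, hv]; ring⟩
  · exact ⟨(2*s+1)*v + u*(2*t+1), by rw [hs, ht, hu, hv]; ring⟩

private lemma pow_parity {δ : GaussianInt} (h1 : Odd δ.re) (h2 : Even δ.im) (n : ℕ) :
    Odd ((δ ^ n).re) ∧ Even ((δ ^ n).im) := by
  induction n with
  | zero => exact ⟨⟨0, by simp [Zsqrtd.re_one]⟩, ⟨0, by simp [Zsqrtd.im_one]⟩⟩
  | succ n ih =>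
    rw [pow_succ]
    exact mul_parity ih.1 ih.2 h1 h2

/-- Powers `γ^(2^j)` of `γ = 1 + 2i` have imaginary part of 2-adic valuation exactly `j+1`. -/
private lemma pow_two_pow (j : ℕ) :
    Odd (((⟨1,2⟩ : GaussianInt) ^ (2 ^ j)).re) ∧
      ∃ W : ℤ, Odd W ∧ ((⟨1,2⟩ : GaussianInt) ^ (2 ^ j)).im = 2 ^ (j+1) * W := by
  induction j with
  | zero =>
    refine ⟨⟨0, by norm_num⟩, 1, ⟨0, by norm_num⟩, by norm_num⟩
  | succ j ih =>
    obtain ⟨⟨s, hs⟩, W, hW, him⟩ := ih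
    have hsplit : ((⟨1,2⟩ : GaussianInt) ^ (2 ^ (j+1)))
        = ((⟨1,2⟩ : GaussianInt) ^ (2 ^ j)) * ((⟨1,2⟩ : GaussianInt) ^ (2 ^ j)) := by
      rw [← pow_add]
      congr 1
      ring
    rw [hsplit, Zsqrtd.re_mul, Zsqrtd.im_mul]
    constructor
    · exact ⟨2*s*s + 2*s - 2^(2*j+1)*W*W, by rw [hs, him]; ring⟩
    · exact ⟨W * (2*s+1), hW.mul ⟨s, by ring⟩, by rw [hs, him]; ring⟩

/-- Odd powers preserve the valuation of the imaginary part. -/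
private lemma odd_pow_im {δ : GaussianInt} (h1 : Odd δ.re) (h2 : Even δ.im) (s : ℕ) :
    ∃ u : ℤ, Odd u ∧ (δ ^ (2*s+1)).im = δ.im * u := by
  induction s with
  | zero => exact ⟨1, ⟨0, by norm_num⟩, by simp⟩
  | succ s ih =>
    obtain ⟨u, hu, him⟩ := ih
    have hR : Odd ((δ ^ (2*s+1)).re) := (pow_parity h1 h2 _).1
    obtain ⟨x, hx⟩ := h2
    have hsplit : δ ^ (2*(s+1)+1) = δ ^ (2*s+1) * (δ * δ) := by
      rw [show 2*(s+1)+1 = (2*s+1)+2 by ring, pow_add, pow_two]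
    refine ⟨2 * (δ ^ (2*s+1)).re * δ.re + u * (δ.re * δ.re - δ.im * δ.im), ?_, ?_⟩
    · obtain ⟨r, hr⟩ := h1
      refine (Even.add_odd ⟨(δ ^ (2*s+1)).re * δ.re, by ring⟩
        (hu.mul ⟨2*r*r + 2*r - 2*x*x, by rw [hr, hx]; ring⟩))
    · rw [hsplit, Zsqrtd.im_mul, Zsqrtd.re_mul, Zsqrtd.im_mul, him]
      ring

/-- For `0 < d < 2q`, `4q` does not divide the imaginary part of `γ^d`. -/
private lemma im_not_dvd (e q : ℕ) (hq : q = 2 ^ e) {d : ℕ} (hd0 : 0 < d) (hd : d < 2 * q) :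
    ¬ (4 * (q:ℤ)) ∣ ((⟨1,2⟩ : GaussianInt) ^ d).im := by
  have h4q : (4 * (q:ℤ)) = 2 ^ (e + 2) := by subst hq; push_cast; ring
  obtain ⟨j, r, hr, hdr⟩ := Nat.exists_eq_pow_mul_and_not_dvd hd0.ne' 2 (by norm_num)
  obtain ⟨s, hs⟩ := Nat.odd_iff.mpr (Nat.two_dvd_ne_zero.mp hr)
  obtain ⟨hXodd, W, hW, him⟩ := pow_two_pow j
  have heven : Even (((⟨1,2⟩ : GaussianInt) ^ (2 ^ j)).im) := ⟨2^j * W, by rw [him]; ring⟩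
  obtain ⟨u, hu, himd⟩ := odd_pow_im hXodd heven s
  have hdeq : ((⟨1,2⟩ : GaussianInt) ^ d).im = 2 ^ (j+1) * (W * u) := by
    rw [hdr, pow_mul, hs, himd, him]; ring
  -- j ≤ e
  have hj : j ≤ e := by
    have h1 : 2 ^ j ≤ d := by
      calc 2 ^ j = 2 ^ j * 1 := by ring
      _ ≤ 2 ^ j * r := by
          exact Nat.mul_le_mul_left _ (by omega)
      _ = d := hdr.symm
    have h2 : (2:ℕ) ^ j < 2 ^ (e+1) := by
      calc (2:ℕ) ^ j ≤ d := h1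
      _ < 2 * q := hd
      _ = 2 ^ (e+1) := by rw [hq]; ring
    have := (Nat.pow_lt_pow_iff_right (by norm_num : 1 < 2)).mp h2
    omega
  intro hdvd
  rw [hdeq, h4q] at hdvd
  have hdvd2 : ((2:ℤ) ^ (j+1) * 2) ∣ 2 ^ (j+1) * (W * u) := by
    refine dvd_trans ?_ hdvd
    have : (2:ℤ) ^ (j+1) * 2 = 2 ^ (j+2) := by ring
    rw [this]
    exact pow_dvd_pow 2 (by omega)
  have : (2:ℤ) ∣ W * u := (mul_dvd_mul_iff_left (by positivity : (2:ℤ)^(j+1) ≠ 0)).mp hdvd2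
  have hodd : Odd (W * u) := hW.mul hu
  rw [Int.odd_iff] at hodd
  omega

private lemma gnorm_pow (m : ℕ) :
    ((⟨1,2⟩ : GaussianInt) ^ m).re * ((⟨1,2⟩ : GaussianInt) ^ m).re
      + ((⟨1,2⟩ : GaussianInt) ^ m).im * ((⟨1,2⟩ : GaussianInt) ^ m).im = 5 ^ m := by
  induction m with
  | zero => norm_num
  | succ m ih =>
    rw [pow_succ, Zsqrtd.re_mul, Zsqrtd.im_mul]
    have h1 : (⟨1,2⟩ : GaussianInt).re = 1 := rfl
    have h2 : (⟨1,2⟩ : GaussianInt).im = 2 := rfl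
    rw [h1, h2, pow_succ]
    linear_combination 5 * ih

private lemma core_le (e q : ℕ) (hq : q = 2 ^ e) {m n : ℕ} (hmn : m ≤ n) (hn : n < 2 * q)
    (h : (4 * (q:ℤ)) ∣ (((⟨1,2⟩ : GaussianInt) ^ m).im * ((⟨1,2⟩ : GaussianInt) ^ n).re
      - ((⟨1,2⟩ : GaussianInt) ^ n).im * ((⟨1,2⟩ : GaussianInt) ^ m).re)) : m = n := by
  have h4q : (4 * (q:ℤ)) = 2 ^ (e + 2) := by subst hq; push_cast; ring
  rcases Nat.eq_or_lt_of_le hmn with heq | hlt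
  · exact heq
  exfalso
  set d := n - m with hdd
  have hnd : n = m + d := by omega
  have hsplit : (⟨1,2⟩ : GaussianInt) ^ n = (⟨1,2⟩ : GaussianInt) ^ m * (⟨1,2⟩ : GaussianInt) ^ d := by
    rw [hnd, pow_add]
  have hDeq : ((⟨1,2⟩ : GaussianInt) ^ m).im * ((⟨1,2⟩ : GaussianInt) ^ n).re
      - ((⟨1,2⟩ : GaussianInt) ^ n).im * ((⟨1,2⟩ : GaussianInt) ^ m).re
      = -((5:ℤ) ^ m * ((⟨1,2⟩ : GaussianInt) ^ d).im) := by
    rw [hsplit, Zsqrtd.re_mul, Zsqrtd.im_mul]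
    linear_combination (-((⟨1,2⟩ : GaussianInt) ^ d).im) * gnorm_pow m
  rw [hDeq, dvd_neg] at h
  have hcop : IsCoprime (4 * (q:ℤ)) ((5:ℤ) ^ m) := by
    rw [h4q]
    exact IsCoprime.pow (⟨-2, 1, by ring⟩ : IsCoprime (2:ℤ) 5)
  have h2 : (4 * (q:ℤ)) ∣ ((⟨1,2⟩ : GaussianInt) ^ d).im := hcop.dvd_of_dvd_mul_left h
  exact im_not_dvd e q hq (by omega) (by omega) h2

private lemma core (e q : ℕ) (hq : q = 2 ^ e) {m n : ℕ} (hm : m < 2 * q) (hn : n < 2 * q)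
    (h : (4 * (q:ℤ)) ∣ (((⟨1,2⟩ : GaussianInt) ^ m).im * ((⟨1,2⟩ : GaussianInt) ^ n).re
      - ((⟨1,2⟩ : GaussianInt) ^ n).im * ((⟨1,2⟩ : GaussianInt) ^ m).re)) : m = n := by
  rcases le_total m n with hle | hle
  · exact core_le e q hq hle hn h
  · refine (core_le e q hq hle hm ?_).symm
    have := dvd_neg.mpr h
    simpa [neg_sub] using this

/-- The Gauss-classes, under ideal multiplication, form a cyclic group of order `2q`:
multiplication is well defined on classes, and there is a class (that of `γ`) whose
`2q` distinct powers exhaust all the classes.  (Ideals of odd norm in `Z[i]` are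
identified with their normalized generators `a + 2bi`, `a` odd, unique up to sign,
and `α ~ -α`, so Gauss-equivalence of such elements is Gauss-equivalence of ideals.) -/
theorem stmt11 (e : ℕ) (q : ℕ) (hq : q = 2 ^ e) :
    (∀ α α' β β' : GaussianInt,
      GaussEq q α α' → GaussEq q β β' → GaussEq q (α * β) (α' * β')) ∧
    ∃ γ : GaussianInt, Odd γ.re ∧ Even γ.im ∧
      (∀ β : GaussianInt, Odd β.re → Even β.im →
        ∃ n : ℕ, n < 2 * q ∧ GaussEq q β (γ ^ n)) ∧
      (∀ m n : ℕ, m < 2 * q → n < 2 * q → GaussEq q (γ ^ m) (γ ^ n) → m = n) := by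
  have hqpos : 0 < q := by rw [hq]; positivity
  have h2q : 2 * q = 2 ^ (e + 1) := by rw [hq]; ring
  haveI : NeZero (2 * q) := ⟨by omega⟩
  constructor
  · rintro α α' β β' ⟨N, hN⟩ ⟨M, hM⟩
    obtain ⟨c, hc⟩ := hN
    obtain ⟨d, hd⟩ := hM
    refine ⟨N * M, c * β' + α' * d + ((4 * q : ℤ) : GaussianInt) * (c * d), ?_⟩
    push_cast at hc hd ⊢
    linear_combination ((M : ℤ) : GaussianInt) * β * hc + α' * hd
      + (4 * ((q:ℤ) : GaussianInt)) * c * hd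
  · have hγre : Odd ((⟨1,2⟩ : GaussianInt).re) := ⟨0, by norm_num⟩
    have hγim : Even ((⟨1,2⟩ : GaussianInt).im) := ⟨1, by norm_num⟩
    have hunit : ∀ a : ℤ, Odd a → IsUnit ((a : ZMod (2*q))) := by
      intro a ha
      have := odd_unit_zmod (e+1) ha
      rwa [← h2q] at this
    have hiff : ∀ X Y U V : ZMod (2*q), IsUnit Y → IsUnit V →
        (X * Y⁻¹ = U * V⁻¹ ↔ X * V = U * Y) := by
      intro X Y U V hY hV
      have h1 : Y⁻¹ * Y = 1 := ZMod.inv_mul_of_unit _ hY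
      have h2 : V⁻¹ * V = 1 := ZMod.inv_mul_of_unit _ hV
      constructor
      · intro h
        have h' := congrArg (fun z => z * (Y * V)) h
        linear_combination h' + (U * Y) * h2 - (X * V) * h1
      · intro h
        have h' := congrArg (fun z => z * (Y⁻¹ * V⁻¹)) h
        linear_combination h' - (X * Y⁻¹) * h2 + (U * V⁻¹) * h1
    have him : ∀ n : ℕ, ∃ cc : ℤ, ((⟨1,2⟩ : GaussianInt) ^ n).im = 2 * cc := by
      intro n
      obtain ⟨t, ht⟩ := (pow_parity hγre hγim n).2
      exact ⟨t, by omega⟩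
    choose c hc using him
    let f : Fin (2*q) → ZMod (2*q) := fun n =>
      (c n : ZMod (2*q)) * ((((⟨1,2⟩ : GaussianInt) ^ (n:ℕ)).re : ℤ) : ZMod (2*q))⁻¹
    have hfinj : Function.Injective f := by
      intro m n hmn
      have hmn' : (c m : ZMod (2*q)) * ((((⟨1,2⟩ : GaussianInt) ^ (m:ℕ)).re : ℤ) : ZMod (2*q))⁻¹
          = (c n : ZMod (2*q)) * ((((⟨1,2⟩ : GaussianInt) ^ (n:ℕ)).re : ℤ) : ZMod (2*q))⁻¹ := hmn
      have hcross := (hiff _ _ _ _ (hunit _ (pow_parity hγre hγim (m:ℕ)).1)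
        (hunit _ (pow_parity hγre hγim (n:ℕ)).1)).mp hmn'
      have hz : ((c m * ((⟨1,2⟩ : GaussianInt) ^ (n:ℕ)).re
          - c n * ((⟨1,2⟩ : GaussianInt) ^ (m:ℕ)).re : ℤ) : ZMod (2*q)) = 0 := by
        push_cast
        linear_combination hcross
      have hdvd := (ZMod.intCast_zmod_eq_zero_iff_dvd _ _).mp hz
      obtain ⟨w, hw⟩ := hdvd
      push_cast at hw
      have hdvd2 : (4 * (q:ℤ)) ∣ (((⟨1,2⟩ : GaussianInt) ^ (m:ℕ)).im
          * ((⟨1,2⟩ : GaussianInt) ^ (n:ℕ)).re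
          - ((⟨1,2⟩ : GaussianInt) ^ (n:ℕ)).im * ((⟨1,2⟩ : GaussianInt) ^ (m:ℕ)).re) := by
        refine ⟨w, ?_⟩
        rw [hc (m:ℕ), hc (n:ℕ)]
        linear_combination 2 * hw
      exact Fin.ext (core e q hq m.2 n.2 hdvd2)
    have hcard : Fintype.card (Fin (2*q)) = Fintype.card (ZMod (2*q)) := by
      simp [ZMod.card]
    have hfsurj : Function.Surjective f :=
      ((Fintype.bijective_iff_injective_and_card f).mpr ⟨hfinj, hcard⟩).2
    refine ⟨⟨1,2⟩, hγre, hγim, ?_, ?_⟩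
    · intro β hβre hβim
      obtain ⟨b, hb⟩ := hβim
      have hb' : β.im = 2 * b := by omega
      obtain ⟨n, hn⟩ := hfsurj ((b : ZMod (2*q)) * ((β.re : ℤ) : ZMod (2*q))⁻¹)
      refine ⟨n, n.2, ?_⟩
      rw [gaussEq_iff e q hq hβre]
      have hn' : (c (n:ℕ) : ZMod (2*q)) * ((((⟨1,2⟩ : GaussianInt) ^ (n:ℕ)).re : ℤ) : ZMod (2*q))⁻¹
          = (b : ZMod (2*q)) * ((β.re : ℤ) : ZMod (2*q))⁻¹ := hn
      have hcross := (hiff _ _ _ _ (hunit _ (pow_parity hγre hγim (n:ℕ)).1)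
        (hunit _ hβre)).mp hn'
      have hz : ((c (n:ℕ) * β.re - b * ((⟨1,2⟩ : GaussianInt) ^ (n:ℕ)).re : ℤ)
          : ZMod (2*q)) = 0 := by
        push_cast
        linear_combination hcross
      have hdvd := (ZMod.intCast_zmod_eq_zero_iff_dvd _ _).mp hz
      obtain ⟨w, hw⟩ := hdvd
      push_cast at hw
      refine ⟨-w, ?_⟩
      rw [hb', hc (n:ℕ)]
      linear_combination (-2) * hw
    · intro m n hm hn hEq
      have hD := (gaussEq_iff e q hq (pow_parity hγre hγim m).1).mp hEq
      exact core e q hq hm hn hD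
end

section
/- With the Gauss group of order 2q as above (q a power of 2), if an ideal I of Z[i] has norm ≡ 5 mod 8, then its Gauss-class generates the Gauss group. -/
open GaussianInt

/-!
Both `α` and `β` are `≡ 1 (mod 2)`, and the norm condition forces `Im α ≡ 2 (mod 4)`; repeated
squaring then gives `α ^ 2 ^ k = s + 2 ^ (k + 1) (i + 2 δ)` with `s` odd. By induction on `k`,
`N β ≡ α ^ n (mod 2 ^ (k + 1))` is solvable. To lift a solution, write
`N β - α ^ n = 2 ^ (k + 1) γ`; only `γ mod 2` matters. Replacing `(n, N)` by `(n + 2 ^ k, N s)`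
changes `γ` by `i (mod 2)`, which makes `Im γ` even; then replacing `N` by
`N (1 + 2 ^ (k + 1) Re γ)` changes `γ` by `Re γ (mod 2)`, which makes it divisible by `2`.
-/

open Zsqrtd

local notation "ℤ[i]" => GaussianInt

namespace GaussianInt

theorem two_dvd_iff {z : ℤ[i]} : 2 ∣ z ↔ Even z.re ∧ Even z.im := by
  rw [← Int.cast_two, intCast_dvd, even_iff_two_dvd, even_iff_two_dvd]

theorem two_dvd_sub_one_iff {z : ℤ[i]} : 2 ∣ z - 1 ↔ Odd z.re ∧ Even z.im := by
  simp [two_dvd_iff]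

theorem im_eq_two_add_four_mul_of_norm_emod_eight {z : ℤ[i]} (hre : Odd z.re) (him : Even z.im)
    (hnorm : z.norm % 8 = 5) : ∃ c : ℤ, z.im = 2 + 4 * c := by
  obtain ⟨t, ht⟩ := hre
  obtain ⟨b, hb⟩ := him
  obtain ⟨r, hr⟩ := Int.even_mul_succ_self t
  have hb_odd : Odd (b * b) := by
    rw [norm_def, ht, hb] at hnorm
    rw [Int.odd_iff]
    have : (2 * t + 1) * (2 * t + 1) - -1 * (b + b) * (b + b) = 8 * r + 1 + 4 * (b * b) := by
      linear_combination 4 * hr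
    omega
  obtain ⟨c, hc⟩ := (Int.odd_mul.mp hb_odd).1
  exact ⟨c, by rw [hb, hc]; ring⟩

theorem exists_sq_eq_add_two_pow_mul {x δ : ℤ[i]} {s : ℤ} {k : ℕ} (hs : Odd s)
    (hx : x = (s : ℤ[i]) + 2 ^ (k + 1) * (sqrtd + 2 * δ)) :
    ∃ (s' : ℤ) (δ' : ℤ[i]), Odd s' ∧ x ^ 2 = (s' : ℤ[i]) + 2 ^ (k + 2) * (sqrtd + 2 * δ') := by
  obtain ⟨t, rfl⟩ := hs
  refine ⟨(2 * t + 1) ^ 2 - (2 ^ (k + 1)) ^ 2,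
    (t : ℤ[i]) * sqrtd + (2 * (t : ℤ[i]) + 1) * δ + 2 ^ (k + 1) * (sqrtd * δ + δ ^ 2), ?_, ?_⟩
  · exact (Odd.pow ⟨t, rfl⟩).sub_even
      ((even_two.pow_of_ne_zero k.succ_ne_zero).pow_of_ne_zero two_ne_zero)
  · rw [hx]
    push_cast
    linear_combination (2 ^ (k + 1) : ℤ[i]) ^ 2 * dmuld

theorem exists_pow_two_pow_eq {α δ : ℤ[i]} {s : ℤ} (hs : Odd s)
    (hα : α = (s : ℤ[i]) + 2 * (sqrtd + 2 * δ)) (k : ℕ) :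
    ∃ (s' : ℤ) (δ' : ℤ[i]), Odd s' ∧
      α ^ 2 ^ k = (s' : ℤ[i]) + 2 ^ (k + 1) * (sqrtd + 2 * δ') := by
  induction k with
  | zero => exact ⟨s, δ, hs, by simpa using hα⟩
  | succ k ih =>
    obtain ⟨s', δ', hs', h⟩ := ih
    rw [pow_succ, pow_mul]
    exact exists_sq_eq_add_two_pow_mul hs' h

section Lifting

variable {α β γ δ : ℤ[i]} {m N s : ℤ} {n j : ℕ}

theorem exists_even_im_of_mul_sub_pow_eq (hs : Odd s)
    (hj : α ^ j = (s : ℤ[i]) + (m : ℤ[i]) * (sqrtd + 2 * δ)) (hn : 2 ∣ α ^ n - 1)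
    (h : (N : ℤ[i]) * β - α ^ n = (m : ℤ[i]) * γ) :
    ∃ (n' : ℕ) (N' : ℤ) (γ' : ℤ[i]),
      Even γ'.im ∧ (N' : ℤ[i]) * β - α ^ n' = (m : ℤ[i]) * γ' := by
  rcases Int.even_or_odd γ.im with hγ | hγ
  · exact ⟨n, N, γ, hγ, h⟩
  refine ⟨n + j, N * s, (s : ℤ[i]) * γ - α ^ n * (sqrtd + 2 * δ), ?_, ?_⟩
  · have hs1 : (2 : ℤ[i]) ∣ (s : ℤ[i]) - 1 := by
      obtain ⟨t, rfl⟩ := hs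
      exact ⟨t, by push_cast; ring⟩
    have hdiff : (2 : ℤ[i]) ∣ (s : ℤ[i]) * γ - α ^ n * (sqrtd + 2 * δ) - (γ - sqrtd) := by
      have e : (s : ℤ[i]) * γ - α ^ n * (sqrtd + 2 * δ) - (γ - sqrtd)
          = ((s : ℤ[i]) - 1) * γ - (α ^ n - 1) * sqrtd - 2 * (α ^ n * δ) := by ring
      rw [e]
      exact ((dvd_mul_of_dvd_left hs1 _).sub (dvd_mul_of_dvd_left hn _)).sub (dvd_mul_right _ _)
    have hγ' : Even (γ - sqrtd).im := by simpa using hγ.sub_odd odd_one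
    simpa using (two_dvd_iff.mp hdiff).2.add hγ'
  · rw [pow_add, hj]
    push_cast
    linear_combination (s : ℤ[i]) * h

theorem dvd_mul_sub_pow_of_even_im (hNβ : 2 ∣ (N : ℤ[i]) * β - 1)
    (h : (N : ℤ[i]) * β - α ^ n = (m : ℤ[i]) * γ) (hγ : Even γ.im) :
    (2 * m : ℤ[i]) ∣ ((N * (1 + m * γ.re) : ℤ) : ℤ[i]) * β - α ^ n := by
  have : (2 : ℤ[i]) ∣ γ + γ.re * (N * β) := by
    have e : γ + γ.re * (N * β) = (γ + γ.re) + γ.re * (N * β - 1) := by ring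
    rw [e]
    refine dvd_add ?_ (dvd_mul_of_dvd_right hNβ _)
    rw [two_dvd_iff]
    simpa [← two_mul] using hγ
  obtain ⟨ρ, hρ⟩ := this
  exact ⟨ρ, by push_cast; linear_combination h + (m : ℤ[i]) * hρ⟩

end Lifting

theorem exists_dvd_mul_sub_pow {α β δ : ℤ[i]} {s : ℤ} (hs : Odd s)
    (hα : α = (s : ℤ[i]) + 2 * (sqrtd + 2 * δ)) (hβ : 2 ∣ β - 1) (k : ℕ) :
    ∃ (n : ℕ) (N : ℤ), (2 : ℤ[i]) ^ (k + 1) ∣ (N : ℤ[i]) * β - α ^ n := by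
  have hα1 : (2 : ℤ[i]) ∣ α - 1 := by
    obtain ⟨t, rfl⟩ := hs
    exact ⟨(t : ℤ[i]) + sqrtd + 2 * δ, by rw [hα]; push_cast; ring⟩
  have hpow (n : ℕ) : (2 : ℤ[i]) ∣ α ^ n - 1 := hα1.trans (sub_one_dvd_pow_sub_one α n)
  induction k with
  | zero => exact ⟨0, 1, by simpa using hβ⟩
  | succ k ih =>
    obtain ⟨n, N, γ, h⟩ := ih
    obtain ⟨s', δ', hs', hk⟩ := exists_pow_two_pow_eq hs hα k
    obtain ⟨n', N', γ', hγ', h'⟩ := exists_even_im_of_mul_sub_pow_eq (m := 2 ^ (k + 1)) hs'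
      (by push_cast; exact hk) (hpow n) (by push_cast; exact h)
    have hN' : (2 : ℤ[i]) ∣ N' * β - 1 := by
      rw [← sub_add_sub_cancel _ (α ^ n'), h']
      exact dvd_add (dvd_mul_of_dvd_left (by push_cast; exact dvd_pow_self 2 k.succ_ne_zero) _)
        (hpow n')
    refine ⟨n', N' * (1 + 2 ^ (k + 1) * γ'.re), ?_⟩
    simpa [pow_succ, mul_comm] using dvd_mul_sub_pow_of_even_im hN' h' hγ'

end GaussianInt

/-- If an ideal of `Z[i]` (with normalized generator `α = a + 2bi`, `a` odd) has norm
`≡ 5 mod 8`, then its Gauss-class generates the Gauss group: every class is a power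
of the class of `α`. -/
theorem stmt12 (e : ℕ) (q : ℕ) (hq : q = 2 ^ e)
    (α : GaussianInt) (hre : Odd α.re) (him : Even α.im)
    (hnorm : α.norm % 8 = 5) :
    ∀ β : GaussianInt, Odd β.re → Even β.im → ∃ n : ℕ, GaussEq q β (α ^ n) := by
  intro β hβre hβim
  obtain ⟨c, hc⟩ := im_eq_two_add_four_mul_of_norm_emod_eight hre him hnorm
  have hα : α = (α.re : ℤ[i]) + 2 * (sqrtd + 2 * ((c : ℤ[i]) * sqrtd)) := by
    ext
    · simp
    · simp [hc]
      ring
  obtain ⟨n, N, h⟩ :=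
    exists_dvd_mul_sub_pow hre hα (two_dvd_sub_one_iff.mpr ⟨hβre, hβim⟩) (e + 1)
  refine ⟨n, N, ?_⟩
  subst hq
  convert h using 1
  push_cast
  ring
end

section
/- For an odd prime p, define T_p : Z[[x]] → Z[[x]] by Σ c_n x^n ↦ Σ c_{pn} x^n + (-1/p)·Σ c_n x^{pn}, where (-1/p) is the Legendre symbol. For a Gauss-class R let θ(R) = Σ_{I ∈ R} x^{N(I)}. If p ≡ 3 mod 4, then T_p(θ(R)) = 0. -/
/-!
A rational prime `p ≡ 3 mod 4` stays prime in `ℤ[i]`, so `p ∣ N(α)` forces `p ∣ α`. Hence there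
are no generators of norm `p n` unless `p ∣ n`, and `β ↦ p β` is a bijection from generators of
norm `k` onto those of norm `p² k`; it preserves the Gauss class because `p` is a unit modulo
`4q`. So the coefficients of `θ(R)` satisfy `c_{pn} = [p ∣ n] c_{n/p}`, which says `T_p θ(R) = 0`.
-/

open GaussianInt PowerSeries Classical

/-- `θ(R) = Σ_{I ∈ R} x^{N(I)} ∈ Z[[x]]`, for `R` the Gauss-class of `ρ`.  Ideals of
odd norm correspond bijectively to their generators `a + 2bi` with `a` odd and `a > 0`,
so the coefficient of `x^m` is the number of such generators of norm `m` that are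
Gauss-equivalent to `ρ`. -/
noncomputable def thetaG (q : ℕ) (ρ : GaussianInt) : PowerSeries ℤ :=
  PowerSeries.mk fun m =>
    (Nat.card {α : GaussianInt //
      Odd α.re ∧ 0 < α.re ∧ Even α.im ∧ GaussEq q α ρ ∧ α.norm = (m : ℤ)} : ℤ)

/-- The formal Hecke operator `T_p` on `Z[[x]]` for `p ≡ 3 mod 4` (Legendre symbol
`(-1/p) = -1`): `Σ c_n x^n ↦ Σ c_{pn} x^n - Σ c_n x^{pn}`. -/
noncomputable def Tneg (p : ℕ) (f : PowerSeries ℤ) : PowerSeries ℤ :=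
  PowerSeries.mk fun n =>
    PowerSeries.coeff (p * n) f - (if p ∣ n then PowerSeries.coeff (n / p) f else 0)

namespace GaussianInt

theorem intCast_dvd_of_dvd_norm {p : ℕ} [Fact p.Prime] (hp : p % 4 = 3) {α : GaussianInt}
    (h : (p : ℤ) ∣ α.norm) : ((p : ℤ) : GaussianInt) ∣ α := by
  have hprime : Prime ((p : ℤ) : GaussianInt) := by
    simpa using prime_of_nat_prime_of_mod_four_eq_three p hp
  have hnorm : ((p : ℤ) : GaussianInt) ∣ α * star α := by
    rw [← Zsqrtd.norm_eq_mul_conj]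
    exact Int.cast_dvd_cast _ _ h
  refine (hprime.dvd_or_dvd hnorm).elim id fun hstar => ?_
  simpa [starRingEnd_apply] using map_dvd (starRingEnd GaussianInt) hstar

end GaussianInt

theorem isCoprime_four_mul_two_pow {c : ℤ} (hc : Odd c) (e : ℕ) :
    IsCoprime c (4 * 2 ^ e) := by
  obtain ⟨k, rfl⟩ := hc
  have h2 : IsCoprime (2 * k + 1) 2 := ⟨1, -k, by ring⟩
  rw [show (4 : ℤ) * 2 ^ e = 2 ^ (2 + e) by ring]
  exact h2.pow_right

theorem gaussEq_intCast_mul_iff {q : ℕ} {c : ℤ} (hc : IsCoprime c (4 * q)) (β ρ : GaussianInt) :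
    GaussEq q ((c : GaussianInt) * β) ρ ↔ GaussEq q β ρ := by
  constructor
  · rintro ⟨N, h⟩
    exact ⟨N * c, by rwa [Int.cast_mul N c, mul_assoc]⟩
  · rintro ⟨N, h⟩
    obtain ⟨u, v, huv⟩ := hc
    refine ⟨N * u, ?_⟩
    have key : ((N * u : ℤ) : GaussianInt) * ((c : GaussianInt) * β) - ρ =
        ((N : GaussianInt) * β - ρ) - ((4 * q : ℤ) : GaussianInt) * (N * v * β) := by
      have huv' := congrArg (Int.cast (R := GaussianInt)) huv
      push_cast at huv' ⊢
      linear_combination (N : GaussianInt) * β * huv'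
    rw [key]
    exact dvd_sub h (dvd_mul_right _ _)

def thetaGens (q : ℕ) (ρ : GaussianInt) (m : ℤ) : Set GaussianInt :=
  {α | Odd α.re ∧ 0 < α.re ∧ Even α.im ∧ GaussEq q α ρ ∧ α.norm = m}

theorem coeff_thetaG (q : ℕ) (ρ : GaussianInt) (m : ℕ) :
    coeff m (thetaG q ρ) = (thetaGens q ρ m).ncard := by
  rw [thetaG, coeff_mk, ← Nat.card_coe_set_eq]
  rfl

section

variable {q : ℕ} (ρ : GaussianInt)

theorem intCast_mul_mem_thetaGens_iff {c : ℤ} (hc : Odd c) (hc0 : 0 < c)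
    (hcop : IsCoprime c (4 * q)) {β : GaussianInt} {m : ℤ} :
    (c : GaussianInt) * β ∈ thetaGens q ρ (c * c * m) ↔ β ∈ thetaGens q ρ m := by
  simp only [thetaGens, Set.mem_ofPred_eq, Zsqrtd.re_smul, Zsqrtd.im_smul, Zsqrtd.norm_mul,
    Zsqrtd.norm_intCast, gaussEq_intCast_mul_iff hcop, Int.odd_mul, hc, true_and,
    mul_pos_iff_of_pos_left hc0, Int.even_mul, Int.not_even_iff_odd.mpr hc, false_or,
    mul_right_inj' (mul_ne_zero hc0.ne' hc0.ne')]

theorem thetaGens_subset_range_mul {p : ℕ} [Fact p.Prime] (hp : p % 4 = 3) {m : ℤ}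
    (hm : (p : ℤ) ∣ m) : thetaGens q ρ m ⊆ Set.range ((p : ℤ) * · : GaussianInt → GaussianInt) :=
  fun _ hα ↦
    let ⟨β, hβ⟩ := intCast_dvd_of_dvd_norm hp (hα.2.2.2.2 ▸ hm)
    ⟨β, hβ.symm⟩

theorem coeff_thetaG_prime_mul {p : ℕ} [Fact p.Prime] (hp : p % 4 = 3)
    (hcop : IsCoprime (p : ℤ) (4 * q)) (n : ℕ) :
    coeff (p * n) (thetaG q ρ) = if p ∣ n then coeff (n / p) (thetaG q ρ) else 0 := by
  have hp0 : 0 < p := (Fact.out : p.Prime).pos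
  have hodd : Odd (p : ℤ) := (Nat.odd_iff.mpr (by omega)).natCast
  have hrange := thetaGens_subset_range_mul ρ (q := q) hp (dvd_mul_right (p : ℤ) n)
  rw [coeff_thetaG, Nat.cast_mul]
  split_ifs with hn
  · obtain ⟨k, rfl⟩ := hn
    have hp0' : ((p : ℤ) : GaussianInt) ≠ 0 := by exact_mod_cast hp0.ne'
    rw [Nat.mul_div_cancel_left k hp0, coeff_thetaG,
      ← Set.ncard_preimage_of_injective_subset_range (mul_right_injective₀ hp0') hrange]
    congr 3
    ext β
    simpa [mul_assoc] using intCast_mul_mem_thetaGens_iff ρ hodd (by positivity) hcop (m := k)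
  · suffices thetaGens q ρ (p * n) = ∅ by simp [this]
    refine Set.eq_empty_of_forall_notMem fun α hα ↦ hn ?_
    obtain ⟨β, rfl⟩ := hrange hα
    have hnorm : (p : ℤ) * p * β.norm = p * n := by
      rw [← hα.2.2.2.2, Zsqrtd.norm_mul, Zsqrtd.norm_intCast]
    have hp0' : (p : ℤ) ≠ 0 := by exact_mod_cast hp0.ne'
    exact Int.natCast_dvd_natCast.mp ⟨β.norm, mul_left_cancel₀ hp0' (by rw [← hnorm, mul_assoc])⟩

end

theorem stmt14_general (e : ℕ) (q : ℕ) (hq : q = 2 ^ e)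
    (p : ℕ) (hp : p.Prime) (hp4 : p % 4 = 3)
    (ρ : GaussianInt) :
    Tneg p (thetaG q ρ) = 0 := by
  have := Fact.mk hp
  have hcop : IsCoprime (p : ℤ) (4 * q) := by
    subst hq
    simpa using isCoprime_four_mul_two_pow (Nat.odd_iff.mpr (by omega)).natCast e
  ext n
  rw [Tneg, coeff_mk, map_zero, coeff_thetaG_prime_mul ρ hp4 hcop, sub_self]

/-- If `p` is a prime `≡ 3 mod 4`, then `T_p(θ(R)) = 0` for every Gauss-class `R`. -/
theorem stmt14 (e : ℕ) (q : ℕ) (hq : q = 2 ^ e)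
    (p : ℕ) (hp : p.Prime) (hp4 : p % 4 = 3)
    (ρ : GaussianInt) (hre : Odd ρ.re) (him : Even ρ.im) :
    Tneg p (thetaG q ρ) = 0 :=
  stmt14_general e q hq p hp hp4 ρ
end

section
/- Let p ≡ 1 mod 4 be prime, P and P̄ the two ideals of Z[i] of norm p, and R a Gauss-class (mod 4q, q a power of 2). Then T_p(θ(R)) = θ(PR) + θ(P̄R), where T_p(Σ c_n x^n) = Σ c_{pn} x^n + Σ c_n x^{pn}. -/
open GaussianInt PowerSeries Classical

/-- The formal Hecke operator `T_p` on `Z[[x]]` for `p ≡ 1 mod 4` (Legendre symbol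
`(-1/p) = 1`): `Σ c_n x^n ↦ Σ c_{pn} x^n + Σ c_n x^{pn}`. -/
noncomputable def Tpos (p : ℕ) (f : PowerSeries ℤ) : PowerSeries ℤ :=
  PowerSeries.mk fun n =>
    PowerSeries.coeff (p * n) f + (if p ∣ n then PowerSeries.coeff (n / p) f else 0)

namespace Aux15

/-! ## Parity via `ZMod 2` -/

lemma even_iff' (x : ℤ) : Even x ↔ (x : ZMod 2) = 0 := by
  rw [ZMod.intCast_zmod_eq_zero_iff_dvd]
  exact ⟨fun ⟨c, hc⟩ => ⟨c, by omega⟩, fun ⟨c, hc⟩ => ⟨c, by omega⟩⟩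

lemma odd_iff' (x : ℤ) : Odd x ↔ (x : ZMod 2) = 1 := by
  rw [← Int.not_even_iff_odd, even_iff' x]
  generalize (x : ZMod 2) = y
  revert y; decide

lemma mul_parity {a b : GaussianInt} (ha : Odd a.re) (ha' : Even a.im)
    (hb : Odd b.re) (hb' : Even b.im) : Odd (a * b).re ∧ Even (a * b).im := by
  rw [odd_iff', even_iff'] at *
  rw [Zsqrtd.re_mul, Zsqrtd.im_mul]
  push_cast
  rw [ha, ha', hb, hb']
  constructor <;> ring

lemma div_parity {a b c : GaussianInt} (h : a = b * c) (ha : Odd a.re) (ha' : Even a.im)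
    (hb : Odd b.re) (hb' : Even b.im) : Odd c.re ∧ Even c.im := by
  rw [odd_iff', even_iff'] at *
  rw [h, Zsqrtd.re_mul] at ha
  rw [h, Zsqrtd.im_mul] at ha'
  push_cast at ha ha'
  rw [hb, hb'] at ha ha'
  constructor
  · rw [← ha]; ring
  · rw [← ha']; ring

lemma star_parity {a : GaussianInt} (ha : Odd a.re) (ha' : Even a.im) :
    Odd (star a).re ∧ Even (star a).im := by
  rw [Zsqrtd.re_star, Zsqrtd.im_star]
  exact ⟨ha, ha'.neg⟩

lemma odd_ne_zero {x : ℤ} (h : Odd x) : x ≠ 0 := by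
  obtain ⟨k, hk⟩ := h; omega

/-! ## Sign normalization -/

def nz (x : GaussianInt) : GaussianInt := if 0 < x.re then x else -x

lemma nz_eq_or (x : GaussianInt) : nz x = x ∨ nz x = -x := by
  unfold nz; split <;> simp

lemma nz_neg (x : GaussianInt) (hx : x.re ≠ 0) : nz (-x) = nz x := by
  unfold nz
  rcases lt_trichotomy x.re 0 with h | h | h
  · simp [h, not_lt.2 h.le, Zsqrtd.re_neg, neg_pos.2 h, not_lt.2 (le_of_lt h)]
  · exact absurd h hx
  · simp [h, Zsqrtd.re_neg, not_lt.2 (neg_nonpos.2 h.le), h.ne', not_lt.2 h.le]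

lemma nz_re_pos {x : GaussianInt} (hx : x.re ≠ 0) : 0 < (nz x).re := by
  unfold nz; split
  · assumption
  · rw [Zsqrtd.re_neg]; omega

lemma nz_idem {x : GaussianInt} (hx : 0 < x.re) : nz x = x := if_pos hx

lemma nz_parity {x : GaussianInt} (h1 : Odd x.re) (h2 : Even x.im) :
    Odd (nz x).re ∧ Even (nz x).im := by
  rcases nz_eq_or x with h | h <;> rw [h]
  · exact ⟨h1, h2⟩
  · rw [Zsqrtd.re_neg, Zsqrtd.im_neg]
    exact ⟨h1.neg, h2.neg⟩

lemma nz_norm (x : GaussianInt) : (nz x).norm = x.norm := by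
  rcases nz_eq_or x with h | h <;> rw [h]
  exact Zsqrtd.norm_neg x

/-! ## Transport of Gauss-equivalence -/

lemma intdvd {q : ℕ} {a : ℤ} (h : (4 * (q:ℤ)) ∣ a) :
    ((4 * q : ℤ) : GaussianInt) ∣ ((a : ℤ) : GaussianInt) :=
  map_dvd (Int.castRingHom GaussianInt) h

lemma geNeg {q : ℕ} {x ρ : GaussianInt} (h : GaussEq q x ρ) : GaussEq q (-x) ρ := by
  obtain ⟨N, h⟩ := h
  refine ⟨-N, ?_⟩
  have e : ((-N : ℤ) : GaussianInt) * (-x) - ρ = (N : GaussianInt) * x - ρ := by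
    push_cast; ring
  rw [e]; exact h

lemma geNz {q : ℕ} {x ρ : GaussianInt} (h : GaussEq q x ρ) : GaussEq q (nz x) ρ := by
  rcases nz_eq_or x with h' | h' <;> rw [h']
  · exact h
  · exact geNeg h

lemma geOfNz {q : ℕ} {x ρ : GaussianInt} (h : GaussEq q (nz x) ρ) : GaussEq q x ρ := by
  rcases nz_eq_or x with h' | h' <;> rw [h'] at h
  · exact h
  · simpa using geNeg h

lemma geMulL {q : ℕ} {γ ρ : GaussianInt} (π : GaussianInt) (h : GaussEq q γ ρ) :
    GaussEq q (π * γ) (π * ρ) := by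
  obtain ⟨N, h⟩ := h
  refine ⟨N, ?_⟩
  have e : (N : GaussianInt) * (π * γ) - π * ρ = π * ((N : GaussianInt) * γ - ρ) := by ring
  rw [e]; exact h.mul_left π

lemma geDivL {q p : ℕ} {γ ρ π : GaussianInt}
    (hpp : π * star π = (p : GaussianInt))
    (h : GaussEq q (π * γ) ρ) : GaussEq q γ (star π * ρ) := by
  obtain ⟨N, h⟩ := h
  refine ⟨N * p, ?_⟩
  have e : ((N * p : ℤ) : GaussianInt) * γ - star π * ρ
      = star π * ((N : GaussianInt) * (π * γ) - ρ) := by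
    push_cast
    linear_combination (-(N : GaussianInt) * γ) * hpp
  rw [e]; exact h.mul_left _

lemma geMulInv {q p : ℕ} {γ ρ π : GaussianInt} {c : ℤ}
    (hc : (4 * (q:ℤ)) ∣ (p:ℤ) * c - 1)
    (hpp : π * star π = (p : GaussianInt))
    (h : GaussEq q γ (star π * ρ)) : GaussEq q (π * γ) ρ := by
  obtain ⟨M, h⟩ := h
  refine ⟨M * c, ?_⟩
  have e : ((M * c : ℤ) : GaussianInt) * (π * γ) - ρ
      = ((c : ℤ) : GaussianInt) * π * ((M : GaussianInt) * γ - star π * ρ)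
        + (((p:ℤ) * c - 1 : ℤ) : GaussianInt) * ρ := by
    push_cast
    linear_combination ((c : GaussianInt) * ρ) * hpp
  rw [e]
  exact dvd_add (h.mul_left _) ((intdvd hc).mul_right ρ)

lemma geCancel {q p : ℕ} {γ ρ π : GaussianInt} {c : ℤ}
    (hc : (4 * (q:ℤ)) ∣ (p:ℤ) * c - 1)
    (hpp : π * star π = (p : GaussianInt))
    (h : GaussEq q (π * γ) (π * ρ)) : GaussEq q γ ρ := by
  obtain ⟨M, h⟩ := h
  refine ⟨M, ?_⟩
  have e : (M : GaussianInt) * γ - ρ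
      = ((c : ℤ) : GaussianInt) * star π * ((M : GaussianInt) * (π * γ) - π * ρ)
        - (((p:ℤ) * c - 1 : ℤ) : GaussianInt) * ((M : GaussianInt) * γ - ρ) := by
    push_cast
    linear_combination (-(c : GaussianInt) * ((M:GaussianInt) * γ - ρ)) * hpp
  rw [e]
  exact dvd_sub (h.mul_left _) ((intdvd hc).mul_right _)

/-! ## Arithmetic facts -/

lemma ex_pinv (e : ℕ) (q : ℕ) (hq : q = 2 ^ e) (p : ℕ) (hodd : p % 2 = 1) :
    ∃ c : ℤ, (4 * (q:ℤ)) ∣ (p:ℤ) * c - 1 := by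
  have h2 : IsCoprime (p : ℤ) 2 := by
    rw [Int.isCoprime_iff_gcd_eq_one]
    have hn : Nat.gcd p 2 = 1 := by
      have := (Nat.prime_two.coprime_iff_not_dvd).mpr (show ¬ 2 ∣ p by omega)
      exact Nat.Coprime.gcd_eq_one this.symm
    show Int.gcd (p:ℤ) ((2:ℕ):ℤ) = 1
    rw [Int.gcd_natCast_natCast]
    exact hn
  have h4 : IsCoprime (p : ℤ) (4 * (q:ℤ)) := by
    have : (4 : ℤ) * (q:ℤ) = 2 ^ (e + 2) := by subst hq; push_cast; ring
    rw [this]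
    exact h2.pow_right
  obtain ⟨u, v, huv⟩ := h4
  exact ⟨u, ⟨-v, by linarith⟩⟩

lemma sq_one {a b : ℤ} (h : a * a + b * b = 1) :
    (a = 0 ∧ (b = 1 ∨ b = -1)) ∨ (b = 0 ∧ (a = 1 ∨ a = -1)) := by
  have ha : -1 ≤ a ∧ a ≤ 1 := by
    constructor <;> nlinarith [sq_nonneg b, sq_nonneg (a - 1), sq_nonneg (a + 1)]
  have hb : -1 ≤ b ∧ b ≤ 1 := by
    constructor <;> nlinarith [sq_nonneg a, sq_nonneg (b - 1), sq_nonneg (b + 1)]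
  obtain ⟨h1, h2⟩ := ha; obtain ⟨h3, h4⟩ := hb
  interval_cases a <;> interval_cases b <;> omega

lemma norm_prime_of {π : GaussianInt} {p : ℕ} (hp : p.Prime) (hπ : π.norm = (p : ℤ)) :
    Prime π := by
  rw [← UniqueFactorizationMonoid.irreducible_iff_prime]
  constructor
  · intro hu
    rw [← Zsqrtd.norm_eq_one_iff, hπ, Int.natAbs_natCast] at hu
    exact hp.one_lt.ne' hu
  · intro a b hab
    have h : a.norm.natAbs * b.norm.natAbs = p := by
      rw [← Int.natAbs_mul, ← Zsqrtd.norm_mul, ← hab, hπ, Int.natAbs_natCast]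
    rcases (hp.eq_one_or_self_of_dvd _ ⟨_, h.symm⟩) with h1 | h1
    · exact Or.inl (Zsqrtd.norm_eq_one_iff.1 h1)
    · right
      apply Zsqrtd.norm_eq_one_iff.1
      have := hp.pos
      nlinarith [h, h1]

lemma pi_nonzero {π : GaussianInt} {p : ℕ} (hp : p.Prime) (hπ : π.norm = (p : ℤ)) :
    π ≠ 0 := by
  intro h
  rw [h, Zsqrtd.norm_zero] at hπ
  exact hp.pos.ne' (by exact_mod_cast hπ.symm)

lemma pi_not_dvd_conj {π : GaussianInt} {p : ℕ} (hp : p.Prime) (hπ : π.norm = (p : ℤ))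
    (hπre : Odd π.re) (hπim : Even π.im) : ¬ π ∣ star π := by
  rintro ⟨c, hc⟩
  have hnc : c.norm = 1 := by
    have h1 : (star π).norm = π.norm * c.norm := by rw [hc, Zsqrtd.norm_mul]
    rw [Zsqrtd.norm_conj, hπ] at h1
    have hp0 : (p : ℤ) ≠ 0 := by exact_mod_cast hp.pos.ne'
    have := mul_left_cancel₀ hp0 (show (p:ℤ) * 1 = (p:ℤ) * c.norm by linarith [h1])
    linarith [this]
  have hcre : c.re * c.re + c.im * c.im = 1 := by
    have h := hnc
    rw [Zsqrtd.norm_def] at h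
    linarith [h]
  have h1 : π.re = π.re * c.re - π.im * c.im := by
    have := congrArg Zsqrtd.re hc
    rw [Zsqrtd.re_star, Zsqrtd.re_mul] at this
    linarith [this]
  have h2 : -π.im = π.re * c.im + π.im * c.re := by
    have := congrArg Zsqrtd.im hc
    rw [Zsqrtd.im_star, Zsqrtd.im_mul] at this
    linarith [this]
  obtain ⟨l, hl⟩ := hπre
  obtain ⟨m, hm⟩ := hπim
  rcases sq_one hcre with ⟨h0, hpm⟩ | ⟨h0, hpm⟩
  · rw [h0] at h1
    rcases hpm with h | h <;> rw [h] at h1 <;> omega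
  · rw [h0] at h1 h2
    rcases hpm with h | h
    · rw [h] at h2
      have him : π.im = 0 := by linarith
      rw [Zsqrtd.norm_def, him] at hπ
      have h5 : π.re.natAbs * π.re.natAbs = p := by
        have : π.re * π.re = (p : ℤ) := by linarith [hπ]
        rw [← Int.natAbs_mul, this, Int.natAbs_natCast]
      rcases (hp.eq_one_or_self_of_dvd _ ⟨_, h5.symm⟩) with h6 | h6
      · rw [h6] at h5; have := hp.one_lt; omega
      · rw [h6] at h5; have := hp.one_lt; nlinarith [h5]
    · rw [h] at h1
      omega

/-! ## The counting sets -/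

def SS (q : ℕ) (ρ : GaussianInt) (m : ℕ) : Set GaussianInt :=
  {α | Odd α.re ∧ 0 < α.re ∧ Even α.im ∧ GaussEq q α ρ ∧ α.norm = (m : ℤ)}

lemma SS_finite (q : ℕ) (ρ : GaussianInt) (m : ℕ) : (SS q ρ m).Finite := by
  have hsub : SS q ρ m ⊆ (fun z : ℤ × ℤ => (⟨z.1, z.2⟩ : GaussianInt)) ''
      (Set.Icc (-(m:ℤ)) m ×ˢ Set.Icc (-(m:ℤ)) m) := by
    intro α hα
    obtain ⟨-, -, -, -, hn⟩ := hα
    have hself : ∀ a : ℤ, a ≤ a * a := by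
      intro a
      rcases le_or_gt a 0 with h | h
      · exact h.trans (mul_self_nonneg a)
      · nlinarith
    have hn' : α.re * α.re + α.im * α.im = (m:ℤ) := by
      rw [Zsqrtd.norm_def] at hn; linarith [hn]
    refine ⟨(α.re, α.im), ⟨⟨?_, ?_⟩, ?_, ?_⟩, ?_⟩
    · simp only [Set.mem_Icc]; nlinarith [hself α.re, hself (-α.re), mul_self_nonneg α.im]
    · nlinarith [hself α.re, mul_self_nonneg α.im]
    · simp only [Set.mem_Icc]; nlinarith [hself (-α.im), mul_self_nonneg α.re]
    · nlinarith [hself α.im, mul_self_nonneg α.re]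
    · rfl
  exact Set.Finite.subset (Set.Finite.image _ ((Set.finite_Icc _ _).prod (Set.finite_Icc _ _))) hsub

section Main

variable {e q p : ℕ} {π ρ : GaussianInt}
variable (hq : q = 2 ^ e) (hp : p.Prime) (hp4 : p % 4 = 1)
variable (hπ : π.norm = (p : ℤ)) (hπre : Odd π.re) (hπim : Even π.im)

/-- `π * star π = p` in `ℤ[i]`. -/
lemma hpp_of (hπ : π.norm = (p : ℤ)) : π * star π = (p : GaussianInt) := by
  have h := Zsqrtd.norm_eq_mul_conj π
  rw [hπ] at h
  exact_mod_cast h.symm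

include hq hp hp4 hπ hπre hπim in
/-- Bijection 1 : `α` of norm `pn` equivalent to `ρ` and divisible by `π` correspond
to `β` of norm `n` equivalent to `star π * ρ`. -/
lemma card1 (n : ℕ) :
    (SS q ρ (p * n) ∩ {α | π ∣ α}).ncard = (SS q (star π * ρ) n).ncard := by
  obtain ⟨c, hc⟩ := ex_pinv e q hq p (by omega)
  have hpp := hpp_of hπ
  have hπ0 : π ≠ 0 := pi_nonzero hp hπ
  have himg : (fun β => nz (π * β)) '' SS q (star π * ρ) n = SS q ρ (p * n) ∩ {α | π ∣ α} := by
    apply Set.eq_of_subset_of_subset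
    · rintro α ⟨β, ⟨hbre, hbpos, hbim, hbeq, hbn⟩, rfl⟩
      obtain ⟨hre, him⟩ := mul_parity hπre hπim hbre hbim
      obtain ⟨hre', him'⟩ := nz_parity hre him
      refine ⟨⟨hre', nz_re_pos (odd_ne_zero hre), him', geNz (geMulInv hc hpp hbeq), ?_⟩, ?_⟩
      · rw [nz_norm, Zsqrtd.norm_mul, hπ, hbn]; push_cast; ring
      · show π ∣ nz (π * β)
        rcases nz_eq_or (π * β) with h | h <;> rw [h]
        · exact dvd_mul_right π β
        · exact dvd_neg.mpr (dvd_mul_right π β)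
    · rintro α ⟨⟨hre, hpos, him, heq, hn⟩, γ, hγ⟩
      obtain ⟨hgre, hgim⟩ := div_parity hγ hre him hπre hπim
      have hg0 : γ.re ≠ 0 := odd_ne_zero hgre
      refine ⟨nz γ, ⟨(nz_parity hgre hgim).1, nz_re_pos hg0, (nz_parity hgre hgim).2,
        ?_, ?_⟩, ?_⟩
      · exact geNz (geDivL hpp (hγ ▸ heq))
      · rw [nz_norm]
        have h1 : (p:ℤ) * γ.norm = (p:ℤ) * (n:ℤ) := by
          have := hγ ▸ hn
          rw [Zsqrtd.norm_mul, hπ] at this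
          rw [this]; push_cast; ring
        exact mul_left_cancel₀ (show (p:ℤ) ≠ 0 by exact_mod_cast hp.pos.ne') h1
      · show nz (π * nz γ) = α
        rcases nz_eq_or γ with h | h <;> rw [h]
        · rw [← hγ, nz_idem hpos]
        · rw [show π * -γ = -(π * γ) by ring, ← hγ, nz_neg α (odd_ne_zero hre), nz_idem hpos]
  rw [← himg]
  refine Set.ncard_image_of_injOn ?_
  rintro β₁ ⟨h1re, h1pos, h1im, -, -⟩ β₂ ⟨h2re, h2pos, h2im, -, -⟩ h
  have hO1 := (mul_parity hπre hπim h1re h1im).1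
  have hO2 := (mul_parity hπre hπim h2re h2im).1
  replace h : nz (π * β₁) = nz (π * β₂) := h
  have key : π * β₁ = π * β₂ ∨ π * β₁ = -(π * β₂) := by
    rcases nz_eq_or (π * β₁) with e1 | e1 <;> rcases nz_eq_or (π * β₂) with e2 | e2 <;>
      rw [e1, e2] at h
    · exact Or.inl h
    · exact Or.inr h
    · exact Or.inr (by rw [← neg_neg (π * β₁), h])
    · exact Or.inl (by have := congrArg Neg.neg h; simpa using this)
  rcases key with h' | h'
  · exact mul_left_cancel₀ hπ0 h'
  · exfalso
    have hb : β₁ = -β₂ := mul_left_cancel₀ hπ0 (by rw [h']; ring)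
    have hbre : β₁.re = -β₂.re := by rw [hb]; simp [Zsqrtd.re_neg]
    omega

include hp hp4 in
/-- scaling by the integer `p` preserves the Gauss class (both directions). -/
lemma geScale {c : ℤ} (hc : (4 * (q:ℤ)) ∣ (p:ℤ) * c - 1) {γ : GaussianInt}
    (h : GaussEq q γ ρ) : GaussEq q (((p:ℕ) : GaussianInt) * γ) ρ := by
  obtain ⟨N, h⟩ := h
  refine ⟨N * c, ?_⟩
  have e : ((N * c : ℤ) : GaussianInt) * (((p:ℕ) : GaussianInt) * γ) - ρ
      = ((c * (p:ℤ) : ℤ) : GaussianInt) * ((N : GaussianInt) * γ - ρ)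
        + (((p:ℤ) * c - 1 : ℤ) : GaussianInt) * ρ := by
    push_cast; ring
  rw [e]
  exact dvd_add (h.mul_left _) ((intdvd hc).mul_right ρ)

lemma geScaleInv {q p : ℕ} {γ ρ : GaussianInt}
    (h : GaussEq q (((p:ℕ) : GaussianInt) * γ) ρ) : GaussEq q γ ρ := by
  obtain ⟨N, h⟩ := h
  refine ⟨N * p, ?_⟩
  have e : ((N * (p:ℤ) : ℤ) : GaussianInt) * γ - ρ
      = (N : GaussianInt) * (((p:ℕ) : GaussianInt) * γ) - ρ := by
    push_cast; ring
  rw [e]; exact h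

include hq hp hp4 in
/-- Counting generators of norm `pn` divisible by `p` itself. -/
lemma cardP (n : ℕ) :
    (SS q ρ (p * n) ∩ {α | ((p:ℕ) : GaussianInt) ∣ α}).ncard
      = if p ∣ n then (SS q ρ (n / p)).ncard else 0 := by
  obtain ⟨c, hc⟩ := ex_pinv e q hq p (by omega)
  have hpodd : Odd ((p:ℕ) : ℤ) := by rw [Int.odd_iff]; omega
  have hp0 : (0:ℤ) < (p:ℤ) := by exact_mod_cast hp.pos
  have hre : (((p:ℕ) : GaussianInt)).re = (p:ℤ) := Zsqrtd.re_natCast p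
  have him : (((p:ℕ) : GaussianInt)).im = 0 := Zsqrtd.im_natCast p
  by_cases hdvd : p ∣ n
  · rw [if_pos hdvd]
    obtain ⟨k, rfl⟩ := hdvd
    have hk : p * k / p = k := Nat.mul_div_cancel_left k hp.pos
    have himg : (fun γ => ((p:ℕ) : GaussianInt) * γ) '' SS q ρ (p * k / p)
        = SS q ρ (p * (p * k)) ∩ {α | ((p:ℕ) : GaussianInt) ∣ α} := by
      apply Set.eq_of_subset_of_subset
      · rintro α ⟨γ, ⟨hgre, hgpos, hgim, hgeq, hgn⟩, rfl⟩
        rw [hk] at hgn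
        refine ⟨⟨?_, ?_, ?_, geScale hp hp4 hc hgeq, ?_⟩, ⟨γ, rfl⟩⟩
        · rw [Zsqrtd.re_mul, hre, him]
          simpa using hpodd.mul hgre
        · rw [Zsqrtd.re_mul, hre, him]
          have : (0:ℤ) < (p:ℤ) * γ.re := mul_pos hp0 hgpos
          simpa using this
        · rw [Zsqrtd.im_mul, hre, him]
          simpa using hgim.mul_left (p:ℤ)
        · rw [Zsqrtd.norm_mul, Zsqrtd.norm_natCast, hgn]; push_cast; ring
      · rintro α ⟨⟨hare, hapos, haim, haeq, han⟩, δ, hδ⟩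
        refine ⟨δ, ⟨?_, ?_, ?_, ?_, ?_⟩, hδ.symm⟩
        · exact (div_parity hδ hare haim (hre ▸ hpodd) (him ▸ Even.zero)).1
        · have h1 : α.re = (p:ℤ) * δ.re := by
            rw [hδ, Zsqrtd.re_mul, hre, him]; ring
          nlinarith [hapos, h1]
        · exact (div_parity hδ hare haim (hre ▸ hpodd) (him ▸ Even.zero)).2
        · exact geScaleInv (hδ ▸ haeq)
        · rw [hk]
          have h1 : (p:ℤ) * ((p:ℤ) * δ.norm) = (p:ℤ) * ((p:ℤ) * (k:ℤ)) := by
            have := hδ ▸ han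
            rw [Zsqrtd.norm_mul, Zsqrtd.norm_natCast] at this
            push_cast at this ⊢
            linarith [this]
          have h2 := mul_left_cancel₀ hp0.ne' (mul_left_cancel₀ hp0.ne' h1)
          exact h2
    rw [← himg]
    exact Set.ncard_image_of_injOn (fun γ₁ _ γ₂ _ h =>
      mul_left_cancel₀ (show ((p:ℕ) : GaussianInt) ≠ 0 by
        intro hz
        have := congrArg Zsqrtd.re hz
        rw [hre] at this
        simp at this
        omega) h)
  · rw [if_neg hdvd]
    convert Set.ncard_empty GaussianInt
    apply Set.eq_empty_iff_forall_notMem.mpr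
    rintro α ⟨⟨-, -, -, -, han⟩, δ, hδ⟩
    apply hdvd
    have h1 : (p:ℤ) * ((p:ℤ) * δ.norm) = (p:ℤ) * (n:ℤ) := by
      have := hδ ▸ han
      rw [Zsqrtd.norm_mul, Zsqrtd.norm_natCast] at this
      push_cast at this ⊢
      linarith [this]
    have h2 := mul_left_cancel₀ hp0.ne' h1
    have h3 : (p:ℤ) ∣ (n:ℤ) := ⟨δ.norm, h2.symm⟩
    exact_mod_cast h3

include hp hπ hπre hπim in
/-- every normalized element of norm `pn` is divisible by `π` or by `star π`. -/
lemma dvd_split {n : ℕ} {α : GaussianInt} (hα : α ∈ SS q ρ (p * n)) :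
    π ∣ α ∨ star π ∣ α := by
  obtain ⟨-, -, -, -, han⟩ := hα
  have hpp := hpp_of hπ
  have hprime : Prime π := norm_prime_of hp hπ
  have hd : π ∣ α * star α := by
    have h1 : ((α.norm : ℤ) : GaussianInt) = α * star α := Zsqrtd.norm_eq_mul_conj α
    have h2 : π ∣ ((α.norm : ℤ) : GaussianInt) := by
      rw [han]
      refine Dvd.dvd.trans ⟨star π, hpp.symm⟩ ?_
      push_cast
      exact Dvd.intro _ rfl
    exact h1 ▸ h2
  rcases hprime.2.2 _ _ hd with h | h
  · exact Or.inl h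
  · right
    obtain ⟨c, hc⟩ := h
    refine ⟨star c, ?_⟩
    have := congrArg star hc
    rw [star_star, star_mul'] at this
    exact this

include hp hπ hπre hπim in
/-- divisibility by both `π` and `star π` is divisibility by `p`. -/
lemma dvd_both {α : GaussianInt} (h1 : π ∣ α) (h2 : star π ∣ α) :
    ((p:ℕ) : GaussianInt) ∣ α := by
  have hpp := hpp_of hπ
  obtain ⟨γ, rfl⟩ := h1
  have hnd : ¬ star π ∣ π := by
    have h3 := pi_not_dvd_conj (π := star π) hp (by rw [Zsqrtd.norm_conj]; exact hπ)
      (star_parity hπre hπim).1 (star_parity hπre hπim).2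
    rwa [star_star] at h3
  have hprime : Prime (star π) := norm_prime_of hp (by rw [Zsqrtd.norm_conj]; exact hπ)
  rcases hprime.2.2 _ _ h2 with h | h
  · exact absurd h hnd
  · obtain ⟨δ, rfl⟩ := h
    exact ⟨δ, by rw [← hpp]; ring⟩

include hq hp hp4 hπ hπre hπim in
/-- The key counting identity. -/
lemma main_count (n : ℕ) :
    (SS q ρ (p * n)).ncard + (if p ∣ n then (SS q ρ (n / p)).ncard else 0)
      = (SS q ((star π) * ρ) n).ncard + (SS q (π * ρ) n).ncard := by
  classical
  set A1 := SS q ρ (p * n) ∩ {α | π ∣ α} with hA1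
  set A2 := SS q ρ (p * n) ∩ {α | star π ∣ α} with hA2
  have hUnion : A1 ∪ A2 = SS q ρ (p * n) := by
    apply Set.eq_of_subset_of_subset
    · rintro α (⟨h, -⟩ | ⟨h, -⟩) <;> exact h
    · intro α hα
      rcases dvd_split hp hπ hπre hπim hα with h | h
      · exact Or.inl ⟨hα, h⟩
      · exact Or.inr ⟨hα, h⟩
  have hInter : A1 ∩ A2 = SS q ρ (p * n) ∩ {α | ((p:ℕ) : GaussianInt) ∣ α} := by
    apply Set.eq_of_subset_of_subset
    · rintro α ⟨⟨hα, h1⟩, -, h2⟩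
      exact ⟨hα, dvd_both hp hπ hπre hπim h1 h2⟩
    · rintro α ⟨hα, δ, rfl⟩
      have hpp := hpp_of hπ
      exact ⟨⟨hα, ⟨star π * δ, by rw [← hpp]; ring⟩⟩, ⟨hα, ⟨π * δ, by rw [← hpp]; ring⟩⟩⟩
  have hfin1 : A1.Finite := (SS_finite q ρ (p * n)).subset Set.inter_subset_left
  have hfin2 : A2.Finite := (SS_finite q ρ (p * n)).subset Set.inter_subset_left
  have hIE := Set.ncard_union_add_ncard_inter A1 A2 hfin1 hfin2
  rw [hUnion, hInter] at hIE
  have hc1 := card1 hq hp hp4 hπ hπre hπim (ρ := ρ) n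
  have hc2 := card1 hq hp hp4 (π := star π) (by rw [Zsqrtd.norm_conj]; exact hπ)
    (star_parity hπre hπim).1 (star_parity hπre hπim).2 (ρ := ρ) n
  rw [star_star] at hc2
  have hcp := cardP hq hp hp4 (ρ := ρ) n
  rw [← hc1, ← hc2, ← hcp, ← hIE]

end Main

end Aux15

/-- For a prime `p ≡ 1 mod 4`, with `P = (π)` and `P̄ = (π̄)` the two ideals of `Z[i]`
of norm `p`, and any Gauss-class `R` (that of `ρ`): `T_p(θ(R)) = θ(PR) + θ(P̄R)`. -/
theorem stmt15 (e : ℕ) (q : ℕ) (hq : q = 2 ^ e)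
    (p : ℕ) (hp : p.Prime) (hp4 : p % 4 = 1)
    (π : GaussianInt) (hπ : π.norm = (p : ℤ)) (hπre : Odd π.re) (hπim : Even π.im)
    (ρ : GaussianInt) (hre : Odd ρ.re) (him : Even ρ.im) :
    Tpos p (thetaG q ρ) = thetaG q (π * ρ) + thetaG q ((star π) * ρ) := by
  ext n
  rw [Tpos, map_add]
  simp only [thetaG, PowerSeries.coeff_mk]
  have key := Aux15.main_count hq hp hp4 hπ hπre hπim (ρ := ρ) n
  have e1 : ∀ (ρ' : GaussianInt) (m : ℕ),
      Nat.card {α : GaussianInt //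
        Odd α.re ∧ 0 < α.re ∧ Even α.im ∧ GaussEq q α ρ' ∧ α.norm = (m : ℤ)}
        = (Aux15.SS q ρ' m).ncard := fun ρ' m => rfl
  rw [e1, e1, e1, e1]
  split_ifs with h
  · rw [if_pos h] at key
    zify at key
    linarith [key]
  · rw [if_neg h] at key
    zify at key
    linarith [key]
end

section
/- Fix a power q of 2 and let R₀ be the principal Gauss-class (ideals (a+4bqi), a odd). Then the mod 2 reduction of θ(R₀) = Σ_{I∈R₀} x^{N(I)} equals F = Σ_{n odd, n>0} x^{n²} in Z/2[[x]]. -/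
open GaussianInt PowerSeries Classical

lemma abs_le_mul_self (a : ℤ) : |a| ≤ a * a := by
  rcases eq_or_ne a 0 with h | h
  · simp [h]
  · have h1 : 1 ≤ |a| := Int.one_le_abs h
    calc |a| = 1 * |a| := (one_mul _).symm
    _ ≤ |a| * |a| := by apply mul_le_mul_of_nonneg_right h1 (abs_nonneg a)
    _ = a * a := abs_mul_abs_self a

lemma norm_eq (α : GaussianInt) : α.norm = α.re * α.re + α.im * α.im := by
  rw [Zsqrtd.norm_def]; ring

lemma norm_finite (n : ℕ) : {α : GaussianInt | α.norm = (n : ℤ)}.Finite := by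
  apply Set.Finite.subset (((Set.finite_Icc (-(n:ℤ)) n).prod (Set.finite_Icc (-(n:ℤ)) n)).image
    (fun p : ℤ × ℤ => (⟨p.1, p.2⟩ : GaussianInt)))
  intro α hα
  have h := hα
  rw [Set.mem_setOf_eq, norm_eq] at h
  have h1 : |α.re| ≤ (n : ℤ) := by
    nlinarith [abs_le_mul_self α.re, mul_self_nonneg α.im]
  have h2 : |α.im| ≤ (n : ℤ) := by
    nlinarith [abs_le_mul_self α.im, mul_self_nonneg α.re]
  rw [abs_le] at h1 h2
  exact ⟨(α.re, α.im), ⟨⟨h1.1, h1.2⟩, ⟨h2.1, h2.2⟩⟩, rfl⟩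

lemma gaussEq_one_iff (e q : ℕ) (hq : q = 2 ^ e) (α : GaussianInt) (h : Odd α.re) :
    GaussEq q α 1 ↔ (4 * q : ℤ) ∣ α.im := by
  have h4q : (4 * q : ℤ) = 2 ^ (e + 2) := by
    subst hq; push_cast; ring
  constructor
  · rintro ⟨N, hN⟩
    rw [Zsqrtd.intCast_dvd] at hN
    obtain ⟨hre, him⟩ := hN
    simp only [Zsqrtd.re_sub, Zsqrtd.im_sub, Zsqrtd.re_mul, Zsqrtd.im_mul,
      Zsqrtd.re_intCast, Zsqrtd.im_intCast, Zsqrtd.re_one, Zsqrtd.im_one] at hre him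
    -- hre : 4q ∣ N * α.re + stuff - 1, him : 4q ∣ N * α.im + ... - 0
    have hre' : (4 * q : ℤ) ∣ N * α.re - 1 := by convert hre using 2; ring
    have him' : (4 * q : ℤ) ∣ N * α.im := by convert him using 1; ring
    have hNodd : Odd N := by
      obtain ⟨k, hk⟩ := hre'
      have : N * α.re = 4 * q * k + 1 := by linarith
      have hodd : Odd (N * α.re) := by
        rw [this]
        refine Even.add_one ⟨2 * q * k, by ring⟩
      exact (Int.odd_mul.mp hodd).1
    have hcop : IsCoprime ((4 * q : ℤ)) N := by
      rw [h4q]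
      apply IsCoprime.pow_left
      obtain ⟨k, hk⟩ := hNodd
      exact ⟨-k, 1, by rw [hk]; ring⟩
    exact hcop.dvd_of_dvd_mul_left him'
  · intro him
    have hcop : IsCoprime α.re ((4 * q : ℤ)) := by
      rw [h4q]
      apply IsCoprime.pow_right
      obtain ⟨k, hk⟩ := h
      exact ⟨1, -k, by rw [hk]; ring⟩
    obtain ⟨u, v, huv⟩ := hcop
    refine ⟨u, ?_⟩
    rw [Zsqrtd.intCast_dvd]
    constructor
    · simp only [Zsqrtd.re_sub, Zsqrtd.re_mul, Zsqrtd.re_intCast, Zsqrtd.im_intCast,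
        Zsqrtd.re_one]
      refine ⟨-v, ?_⟩
      have : u * α.re = 1 - v * (4 * q) := by linarith
      simp [this]; ring
    · simp only [Zsqrtd.im_sub, Zsqrtd.im_mul, Zsqrtd.re_intCast, Zsqrtd.im_intCast,
        Zsqrtd.im_one]
      obtain ⟨c, hc⟩ := him
      exact ⟨u * c, by rw [hc]; ring⟩

lemma key (e q : ℕ) (hq : q = 2 ^ e) (n : ℕ) :
    ((Nat.card {α : GaussianInt //
      Odd α.re ∧ 0 < α.re ∧ Even α.im ∧ GaussEq q α 1 ∧ α.norm = (n : ℤ)} : ℤ) : ZMod 2)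
      = if ∃ k : ℕ, Odd k ∧ 0 < k ∧ n = k ^ 2 then 1 else 0 := by
  classical
  set P : GaussianInt → Prop := fun α =>
    Odd α.re ∧ 0 < α.re ∧ Even α.im ∧ GaussEq q α 1 ∧ α.norm = (n : ℤ) with hP
  have hfin : {α : GaussianInt | P α}.Finite :=
    (norm_finite n).subset fun α hα => hα.2.2.2.2
  have hcard : Nat.card {α : GaussianInt // P α} = hfin.toFinset.card := by
    rw [show {α : GaussianInt // P α} = ↥{α : GaussianInt | P α} from rfl,
      Nat.card_coe_set_eq, Set.ncard_eq_toFinset_card _ hfin]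
  set s : Finset GaussianInt := hfin.toFinset with hs
  have hmem : ∀ α, α ∈ s ↔ P α := by intro α; simp [hs, Set.Finite.mem_toFinset]
  set A : Finset GaussianInt := s.filter (fun α => α.im = 0) with hA
  set B : Finset GaussianInt := s.filter (fun α => ¬ α.im = 0) with hB
  have hsplit : A.card + B.card = s.card := Finset.card_filter_add_card_filter_not _
  -- P is stable under star
  have hPstar : ∀ α, P α → P (star α) := by
    rintro α ⟨h1, h2, h3, h4, h5⟩
    refine ⟨by rwa [Zsqrtd.re_star], by rwa [Zsqrtd.re_star], by rw [Zsqrtd.im_star]; exact h3.neg,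
      ?_, ?_⟩
    · rw [gaussEq_one_iff e q hq _ (by rwa [Zsqrtd.re_star])]
      rw [Zsqrtd.im_star]
      exact ((gaussEq_one_iff e q hq _ h1).mp h4).neg_right
    · rw [norm_eq] at h5 ⊢
      rw [Zsqrtd.re_star, Zsqrtd.im_star]
      rw [← h5]; ring
  have hBcard : (B.card : ZMod 2) = 0 := by
    have hsum : ∑ _x ∈ B, (1 : ZMod 2) = 0 := by
      refine Finset.sum_involution (fun a _ => star a) (fun a ha => by decide)
        (fun a ha _ => ?_) (fun a ha => ?_) (fun a ha => star_star a)
      · intro hc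
        have hc' : star a = a := hc
        have : (star a).im = a.im := by rw [hc']
        rw [Zsqrtd.im_star] at this
        have him : a.im = 0 := by linarith
        rw [hB, Finset.mem_filter] at ha
        exact ha.2 him
      · rw [hB, Finset.mem_filter] at ha
        refine Finset.mem_filter.mpr ⟨(hmem _).mpr (hPstar a ((hmem _).mp ha.1)), ?_⟩
        rw [Zsqrtd.im_star]
        simpa using ha.2
    rw [Finset.sum_const, nsmul_eq_mul, mul_one] at hsum
    exact hsum
  have hAcard : (A.card : ZMod 2) = if ∃ k : ℕ, Odd k ∧ 0 < k ∧ n = k ^ 2 then 1 else 0 := by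
    split_ifs with hex
    · obtain ⟨k, hk, hkpos, hn⟩ := hex
      have hA1 : A = {(⟨(k : ℤ), 0⟩ : GaussianInt)} := by
        apply Finset.eq_singleton_iff_unique_mem.mpr
        constructor
        · rw [hA, Finset.mem_filter, hmem]
          refine ⟨⟨?_, ?_, Even.zero, ?_, ?_⟩, rfl⟩
          · exact Int.odd_coe_nat k |>.mpr hk
          · show (0:ℤ) < (k:ℤ); exact_mod_cast hkpos
          · exact (gaussEq_one_iff e q hq _ (Int.odd_coe_nat k |>.mpr hk)).mpr (dvd_zero _)
          · rw [norm_eq]; simp; rw [hn]; push_cast; ring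
        · intro α hα
          rw [hA, Finset.mem_filter, hmem] at hα
          obtain ⟨⟨h1, h2, h3, h4, h5⟩, him⟩ := hα
          rw [norm_eq, him] at h5
          have hre : α.re = (k : ℤ) := by
            have hsq : α.re * α.re = (k : ℤ) * k := by
              rw [hn] at h5; push_cast at h5 ⊢; nlinarith
            rcases mul_self_eq_mul_self_iff.mp hsq with h | h
            · exact h
            · exfalso
              have hk0 : (0:ℤ) < (k:ℤ) := by exact_mod_cast hkpos
              linarith
          exact Zsqrtd.ext hre him
      rw [hA1, Finset.card_singleton]; norm_num
    · have hA0 : A = ∅ := by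
        rw [Finset.eq_empty_iff_forall_notMem]
        intro α hα
        rw [hA, Finset.mem_filter, hmem] at hα
        obtain ⟨⟨h1, h2, h3, h4, h5⟩, him⟩ := hα
        rw [norm_eq, him] at h5
        apply hex
        refine ⟨α.re.toNat, ?_, ?_, ?_⟩
        · rw [Int.odd_iff] at h1
          rw [Nat.odd_iff]
          omega
        · omega
        · have : ((α.re.toNat : ℤ)) ^ 2 = (n : ℤ) := by
            rw [Int.toNat_of_nonneg h2.le]; nlinarith
          exact_mod_cast this.symm
      rw [hA0]; simp
  show ((Nat.card {α : GaussianInt // P α} : ℤ) : ZMod 2) = _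
  rw [hcard, ← hsplit]
  push_cast
  rw [hBcard, add_zero, hAcard]

/-- The mod 2 reduction of `θ(R₀)`, for `R₀` the principal Gauss-class (the class of
`1`, whose ideals are the `(a + 4bqi)` with `a` odd), equals `F`. -/
theorem stmt17 (e : ℕ) (q : ℕ) (hq : q = 2 ^ e) :
    PowerSeries.map (Int.castRingHom (ZMod 2)) (thetaG q 1) = Fser := by
  ext n
  rw [PowerSeries.coeff_map, thetaG, Fser, PowerSeries.coeff_mk, PowerSeries.coeff_mk]
  exact key e q hq n
end
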